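/- arXiv:1011.4349 — 7 statements merged into one kernel-verified Lean document; each statement's English description precedes it below -/
import Mathlib

section
/- Let X be a nonnegative random variable whose tail P[X > x] = x^{-α} L(x) is regularly varying of index -α with α ≥ 0, where the slowly varying function L satisfies D₁ := lim sup_{x→∞} sup_{y∈[1,x]} L(y)/L(x) < ∞. Let Θ be a positive random variable independent of X with E[Θ^α] < ∞ and P[Θ > x] = o(P[X > x]) as x → ∞. Then P[ΘX > x] ~ E[Θ^α] P[X > x] as x → ∞. -/
open MeasureTheory ProbabilityTheory Filter Real Topology Set

/-- Breiman's theorem under the Denisov–Zwart condition DZ1. -/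
theorem stmt_2 {Ω : Type*} [MeasurableSpace Ω] (μ : Measure Ω) [IsProbabilityMeasure μ]
    (X Θ : Ω → ℝ) (hX : Measurable X) (hΘ : Measurable Θ)
    (hXnn : ∀ ω, 0 ≤ X ω) (hΘpos : ∀ ω, 0 < Θ ω)
    (α : ℝ) (hα : 0 ≤ α) (L : ℝ → ℝ)
    -- the tail of X is x^{-α} L(x)
    (htail : ∀ x > (0:ℝ), (μ {ω | X ω > x}).toReal = x ^ (-α) * L x)
    -- L is slowly varying
    (hL : ∀ t > (0:ℝ), Tendsto (fun x => L (t * x) / L x) atTop (𝓝 1))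
    -- DZ1 : limsup_{x→∞} sup_{y∈[1,x]} L(y)/L(x) < ∞
    (hDZ1 : IsBoundedUnder (· ≤ ·) atTop
      (fun x : ℝ => ⨆ y : Icc (1:ℝ) x, L y / L x))
    -- Θ independent of X
    (hindep : IndepFun Θ X μ)
    -- E[Θ^α] < ∞
    (hmom : ∫⁻ ω, ENNReal.ofReal (Θ ω ^ α) ∂μ ≠ ⊤)
    -- P[Θ > x] = o(P[X > x])
    (ho : Tendsto (fun x => (μ {ω | Θ ω > x}).toReal / (μ {ω | X ω > x}).toReal)
      atTop (𝓝 0)) :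
    Tendsto (fun x => (μ {ω | Θ ω * X ω > x}).toReal / (μ {ω | X ω > x}).toReal)
      atTop (𝓝 ((∫⁻ ω, ENNReal.ofReal (Θ ω ^ α) ∂μ).toReal)) := by
  classical
  -- notation
  set T : ℝ → ℝ := fun s => (μ {ω | X ω > s}).toReal with hTdef
  set ν : Measure ℝ := μ.map Θ with hνdef
  haveI : IsProbabilityMeasure ν := Measure.isProbabilityMeasure_map hΘ.aemeasurable
  have hfin : ∀ s : ℝ, μ {ω | X ω > s} ≠ ⊤ := fun s => (measure_lt_top μ _).ne
  have hTanti : Antitone T := by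
    intro s t hst
    exact ENNReal.toReal_mono (hfin s)
      (measure_mono (fun ω h => lt_of_le_of_lt hst h))
  have hTmeas : Measurable T := hTanti.measurable
  have hTnn : ∀ s, 0 ≤ T s := fun s => ENNReal.toReal_nonneg
  have hT1 : ∀ s, T s ≤ 1 := by
    intro s
    have : (μ {ω | X ω > s}).toReal ≤ (1 : ENNReal).toReal :=
      ENNReal.toReal_mono ENNReal.one_ne_top prob_le_one
    simpa using this
  have hTtail : ∀ x > (0:ℝ), T x = x ^ (-α) * L x := fun x hx => htail x hx
  have hTset : ∀ s : ℝ, μ {ω | X ω > s} = ENNReal.ofReal (T s) :=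
    fun s => (ENNReal.ofReal_toReal (hfin s)).symm
  -- positivity of L
  have hLnn : ∀ x > (0:ℝ), 0 ≤ L x := by
    intro x hx
    have h1 := hTnn x
    rw [hTtail x hx] at h1
    nlinarith [Real.rpow_pos_of_pos hx (-α)]
  have hLpos : ∀ x > (0:ℝ), 0 < L x := by
    by_contra h
    push_neg at h
    obtain ⟨x0, hx0, hL0'⟩ := h
    have hL0 : L x0 = 0 := le_antisymm hL0' (hLnn x0 hx0)
    have hTz : ∀ x ≥ x0, T x = 0 := by
      intro x hx
      refine le_antisymm ?_ (hTnn x)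
      calc T x ≤ T x0 := hTanti hx
        _ = 0 := by rw [hTtail x0 hx0, hL0, mul_zero]
    have hLz : ∀ x ≥ x0, L x = 0 := by
      intro x hx
      have hxpos : 0 < x := lt_of_lt_of_le hx0 hx
      have h2 := hTtail x hxpos
      rw [hTz x hx] at h2
      have hxne : x ^ (-α) ≠ 0 := (Real.rpow_pos_of_pos hxpos _).ne'
      exact (mul_eq_zero.mp h2.symm).resolve_left hxne
    have h0 : Tendsto (fun x => L (2 * x) / L x) atTop (𝓝 0) := by
      refine Tendsto.congr' ?_ tendsto_const_nhds
      filter_upwards [eventually_ge_atTop x0] with x hx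
      rw [hLz (2 * x) (by linarith), zero_div]
    exact one_ne_zero (tendsto_nhds_unique (hL 2 two_pos) h0)
  have hTpos : ∀ x > (0:ℝ), 0 < T x := by
    intro x hx
    rw [hTtail x hx]
    exact mul_pos (Real.rpow_pos_of_pos hx _) (hLpos x hx)
  -- L in terms of T : for y > 0, L y = y ^ α * T y, and L y ≤ y ^ α
  have hLT : ∀ y > (0:ℝ), L y = y ^ α * T y := by
    intro y hy
    rw [hTtail y hy, Real.rpow_neg hy.le]
    field_simp
  have hLle : ∀ y > (0:ℝ), L y ≤ y ^ α := by
    intro y hy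
    rw [hLT y hy]
    calc y ^ α * T y ≤ y ^ α * 1 :=
      mul_le_mul_of_nonneg_left (hT1 y) (Real.rpow_nonneg hy.le α)
      _ = y ^ α := mul_one _
  -- a.e. positivity of θ under ν
  have hae : ∀ᵐ θ ∂ν, 0 < θ := by
    rw [hνdef]
    exact (ae_map_iff hΘ.aemeasurable
      (measurableSet_Ioi : MeasurableSet {θ : ℝ | 0 < θ})).mpr (ae_of_all _ hΘpos)
  -- the key identity
  have hmap : μ.map (fun ω => (Θ ω, X ω)) = (μ.map Θ).prod (μ.map X) :=
    (indepFun_iff_map_prod_eq_prod_map_map hΘ.aemeasurable hX.aemeasurable).mp hindep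
  have hmeasx : ∀ x : ℝ, Measurable (fun θ => T (x / θ)) := fun x =>
    hTmeas.comp (measurable_const.div measurable_id)
  have hkey : ∀ x : ℝ, (μ {ω | Θ ω * X ω > x}).toReal = ∫ θ, T (x / θ) ∂ν := by
    intro x
    have hset : MeasurableSet {p : ℝ × ℝ | x < p.1 * p.2} :=
      measurableSet_lt measurable_const (measurable_fst.mul measurable_snd)
    have h1 : μ {ω | Θ ω * X ω > x} = ∫⁻ θ, (μ.map X) {y | x < θ * y} ∂ν := by
      have hpre : {ω | Θ ω * X ω > x}
          = (fun ω => (Θ ω, X ω)) ⁻¹' {p : ℝ × ℝ | x < p.1 * p.2} := rfl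
      rw [hpre, ← Measure.map_apply (hΘ.prodMk hX) hset, hmap,
        Measure.prod_apply hset]
      rfl
    have h2 : ∀ᵐ θ ∂ν, (μ.map X) {y | x < θ * y} = ENNReal.ofReal (T (x / θ)) := by
      filter_upwards [hae] with θ hθ
      have hs : {y : ℝ | x < θ * y} = Ioi (x / θ) := by
        ext y
        simp only [Set.mem_setOf_eq, Set.mem_Ioi, div_lt_iff₀ hθ]
        constructor <;> intro h <;> nlinarith
      rw [hs, Measure.map_apply hX measurableSet_Ioi]
      exact hTset (x / θ)
    rw [h1, lintegral_congr_ae h2,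
      ← integral_eq_lintegral_of_nonneg_ae (ae_of_all _ fun θ => hTnn (x / θ))
        (hmeasx x).aestronglyMeasurable]
  -- integrability of the integrands
  have hint : ∀ x : ℝ, Integrable (fun θ => T (x / θ)) ν := by
    intro x
    refine Integrable.mono' (integrable_const 1) (hmeasx x).aestronglyMeasurable
      (ae_of_all _ fun θ => ?_)
    rw [Real.norm_eq_abs, abs_of_nonneg (hTnn _)]
    exact hT1 _
  -- the truncated integrand
  set f1 : ℝ → ℝ → ℝ := fun x θ => if θ ≤ x then T (x / θ) / T x else 0 with hf1def
  have hmeasf1 : ∀ x, Measurable (f1 x) := by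
    intro x
    exact Measurable.ite (measurableSet_le measurable_id measurable_const)
      ((hmeasx x).div_const _) measurable_const
  have hf1nn : ∀ x θ, 0 ≤ f1 x θ := by
    intro x θ
    rw [hf1def]
    simp only
    split
    · exact div_nonneg (hTnn _) (hTnn _)
    · exact le_refl 0
  have hintf1 : ∀ x, Integrable (f1 x) ν := by
    intro x
    refine Integrable.mono' (integrable_const ((T x)⁻¹)) (hmeasf1 x).aestronglyMeasurable
      (ae_of_all _ fun θ => ?_)
    rw [Real.norm_eq_abs, abs_of_nonneg (hf1nn x θ)]
    rw [hf1def]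
    simp only
    split
    · rw [div_eq_mul_inv]
      calc T (x / θ) * (T x)⁻¹ ≤ 1 * (T x)⁻¹ :=
        mul_le_mul_of_nonneg_right (hT1 _) (inv_nonneg.mpr (hTnn x))
        _ = (T x)⁻¹ := one_mul _
    · exact inv_nonneg.mpr (hTnn x)
  -- algebraic identity for the ratio
  have halg : ∀ x θ : ℝ, 0 < x → 0 < θ →
      T (x / θ) / T x = θ ^ α * (L (x / θ) / L x) := by
    intro x θ hx hθ
    have hxθ : 0 < x / θ := div_pos hx hθ
    rw [hTtail _ hxθ, hTtail _ hx]
    have h1 : (x / θ) ^ (-α) = x ^ (-α) * θ ^ α := by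
      rw [Real.div_rpow hx.le hθ.le, Real.rpow_neg hθ.le]
      field_simp
    rw [h1]
    have hxne : x ^ (-α) ≠ 0 := (Real.rpow_pos_of_pos hx _).ne'
    have hLne : L x ≠ 0 := (hLpos x hx).ne'
    field_simp
  -- the moment function
  set m : ℝ → ℝ := fun θ => Real.exp (Real.log θ * α) with hmdef
  have hmeq : ∀ θ : ℝ, 0 < θ → m θ = θ ^ α := by
    intro θ hθ
    rw [hmdef]
    simp only
    rw [Real.rpow_def_of_pos hθ]
  have hmmeas : Measurable m := (Real.measurable_log.mul_const α).exp
  have hmnn : ∀ θ, 0 ≤ m θ := fun θ => (Real.exp_pos _).le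
  -- integrability of m w.r.t. ν, and the value of its integral
  have hcomp : ∀ ω, m (Θ ω) = Θ ω ^ α := fun ω => hmeq _ (hΘpos ω)
  have hintm_mu : Integrable (fun ω => m (Θ ω)) μ := by
    constructor
    · exact (hmmeas.comp hΘ).aestronglyMeasurable
    · rw [hasFiniteIntegral_iff_norm]
      have : ∀ ω, ENNReal.ofReal ‖m (Θ ω)‖ = ENNReal.ofReal (Θ ω ^ α) := by
        intro ω
        rw [Real.norm_eq_abs, abs_of_nonneg (hmnn _), hcomp ω]
      rw [lintegral_congr this]
      exact hmom.lt_top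
  have hintm : Integrable m ν := by
    rw [hνdef]
    rw [integrable_map_measure hmmeas.aestronglyMeasurable hΘ.aemeasurable]
    exact hintm_mu
  have hmint_val : ∫ θ, m θ ∂ν = (∫⁻ ω, ENNReal.ofReal (Θ ω ^ α) ∂μ).toReal := by
    rw [hνdef, integral_map hΘ.aemeasurable hmmeas.aestronglyMeasurable]
    rw [integral_eq_lintegral_of_nonneg_ae (ae_of_all _ fun ω => hmnn (Θ ω))
      (hmmeas.comp hΘ).aestronglyMeasurable]
    congr 1
    refine lintegral_congr fun ω => ?_
    rw [hcomp ω]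
  -- the DZ1 bound
  obtain ⟨D, hD⟩ := hDZ1
  rw [Filter.eventually_map] at hD
  -- bounded above : range of the sup is bounded
  have hbdd : ∀ x : ℝ, 0 < x →
      BddAbove (Set.range fun y : Icc (1:ℝ) x => L y / L x) := by
    intro x hx
    refine ⟨x ^ α / L x, ?_⟩
    rintro b ⟨⟨y, hy1, hyx⟩, rfl⟩
    have hypos : (0:ℝ) < y := lt_of_lt_of_le one_pos hy1
    have h1 : L y ≤ x ^ α := le_trans (hLle y hypos)
      (Real.rpow_le_rpow hypos.le hyx hα)
    exact div_le_div_of_nonneg_right h1 (hLpos x hx).le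
  -- D ≥ 1 eventually needed: get it from x ≥ 1 in the eventual set
  -- domination and convergence via dominated convergence
  have hDCT : Tendsto (fun x => ∫ θ, f1 x θ ∂ν) atTop (𝓝 (∫ θ, m θ ∂ν)) := by
    refine tendsto_integral_filter_of_dominated_convergence (fun θ => 1 + D * m θ)
      ?_ ?_ ?_ ?_
    · filter_upwards with x
      exact (hmeasf1 x).aestronglyMeasurable
    · filter_upwards [hD, eventually_ge_atTop (1:ℝ)] with x hDx hx1
      have hxpos : (0:ℝ) < x := lt_of_lt_of_le one_pos hx1
      have hD1 : (1:ℝ) ≤ D := by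
        refine le_trans ?_ hDx
        have hmem : x ∈ Icc (1:ℝ) x := ⟨hx1, le_refl x⟩
        have := le_ciSup (hbdd x hxpos) (⟨x, hmem⟩ : Icc (1:ℝ) x)
        simpa [div_self (hLpos x hxpos).ne'] using this
      filter_upwards [hae] with θ hθ
      rw [Real.norm_eq_abs, abs_of_nonneg (hf1nn x θ), hmeq θ hθ]
      have hθα : 0 ≤ θ ^ α := Real.rpow_nonneg hθ.le α
      rw [hf1def]
      simp only
      split
      · rename_i hθx
        by_cases hθ1 : θ ≤ 1
        · -- small θ : ratio at most 1
          have hxx : x ≤ x / θ := by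
            rw [le_div_iff₀ hθ]
            nlinarith
          have : T (x / θ) ≤ T x := hTanti hxx
          have h2 : T (x / θ) / T x ≤ 1 := by
            rw [div_le_one (hTpos x hxpos)]
            exact this
          nlinarith
        · -- 1 < θ ≤ x : use the DZ1 bound
          push_neg at hθ1
          have hmem : x / θ ∈ Icc (1:ℝ) x := by
            constructor
            · rw [le_div_iff₀ hθ]
              nlinarith
            · exact div_le_self hxpos.le hθ1.le
          have hratio : L (x / θ) / L x ≤ D := by
            refine le_trans ?_ hDx
            exact le_ciSup (hbdd x hxpos) (⟨x / θ, hmem⟩ : Icc (1:ℝ) x)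
          have hrationn : 0 ≤ L (x / θ) / L x :=
            div_nonneg (hLnn _ (lt_of_lt_of_le one_pos hmem.1)) (hLpos x hxpos).le
          rw [halg x θ hxpos hθ]
          calc θ ^ α * (L (x / θ) / L x) ≤ θ ^ α * D :=
              mul_le_mul_of_nonneg_left hratio hθα
            _ = D * θ ^ α := mul_comm _ _
            _ ≤ 1 + D * θ ^ α := by nlinarith
      · nlinarith
    · exact (integrable_const 1).add (hintm.const_mul D)
    · filter_upwards [hae] with θ hθ
      rw [hmeq θ hθ]
      have h1 : Tendsto (fun x => θ ^ α * (L (θ⁻¹ * x) / L x)) atTop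
          (𝓝 (θ ^ α * 1)) := (hL θ⁻¹ (inv_pos.mpr hθ)).const_mul _
      rw [mul_one] at h1
      refine Tendsto.congr' ?_ h1
      filter_upwards [eventually_ge_atTop (max θ 1)] with x hx
      have hx1 : (1:ℝ) ≤ x := le_trans (le_max_right θ 1) hx
      have hxpos : (0:ℝ) < x := lt_of_lt_of_le one_pos hx1
      have hθx : θ ≤ x := le_trans (le_max_left θ 1) hx
      rw [hf1def]
      simp only
      rw [if_pos hθx, halg x θ hxpos hθ, inv_mul_eq_div]
  -- the remainder
  set R : ℝ → ℝ := fun x => (∫ θ, T (x / θ) / T x ∂ν) - ∫ θ, f1 x θ ∂ν with hRdef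
  have hintq : ∀ x, Integrable (fun θ => T (x / θ) / T x) ν := fun x =>
    (hint x).div_const _
  have hR0 : Tendsto R atTop (𝓝 0) := by
    have hub : ∀ᶠ x in atTop, R x ≤ (μ {ω | Θ ω > x}).toReal / T x := by
      filter_upwards [eventually_gt_atTop (0:ℝ)] with x hxpos
      rw [hRdef]
      simp only
      rw [← integral_sub (hintq x) (hintf1 x)]
      have hind : Integrable ((Ioi x).indicator fun _ => (T x)⁻¹) ν :=
        (integrable_const ((T x)⁻¹)).indicator measurableSet_Ioi
      have hle : ∀ θ, T (x / θ) / T x - f1 x θ ≤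
          (Ioi x).indicator (fun _ => (T x)⁻¹) θ := by
        intro θ
        rw [hf1def]
        simp only
        by_cases hθx : θ ≤ x
        · rw [if_pos hθx, sub_self]
          exact Set.indicator_nonneg (fun _ _ => inv_nonneg.mpr (hTnn x)) θ
        · rw [if_neg hθx, sub_zero, Set.indicator_of_mem (by
            simpa [Set.mem_Ioi] using lt_of_not_ge hθx)]
          rw [div_eq_mul_inv]
          calc T (x / θ) * (T x)⁻¹ ≤ 1 * (T x)⁻¹ :=
            mul_le_mul_of_nonneg_right (hT1 _) (inv_nonneg.mpr (hTnn x))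
            _ = (T x)⁻¹ := one_mul _
      calc ∫ θ, (T (x / θ) / T x - f1 x θ) ∂ν
          ≤ ∫ θ, (Ioi x).indicator (fun _ => (T x)⁻¹) θ ∂ν :=
            integral_mono ((hintq x).sub (hintf1 x)) hind hle
        _ = (ν (Ioi x)).toReal • (T x)⁻¹ := integral_indicator_const _ measurableSet_Ioi
        _ = (μ {ω | Θ ω > x}).toReal / T x := by
            rw [hνdef, Measure.map_apply hΘ measurableSet_Ioi]
            have : Θ ⁻¹' Ioi x = {ω | Θ ω > x} := rfl
            rw [this, smul_eq_mul, div_eq_mul_inv]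
    have hlb : ∀ᶠ x in atTop, 0 ≤ R x := by
      filter_upwards with x
      rw [hRdef]
      simp only
      rw [← integral_sub (hintq x) (hintf1 x)]
      refine integral_nonneg fun θ => ?_
      simp only [Pi.zero_apply]
      rw [hf1def]
      simp only
      by_cases hθx : θ ≤ x
      · rw [if_pos hθx, sub_self]
      · rw [if_neg hθx, sub_zero]
        exact div_nonneg (hTnn _) (hTnn _)
    exact tendsto_of_tendsto_of_tendsto_of_le_of_le' tendsto_const_nhds ho hlb hub
  -- assemble
  have hsum : Tendsto (fun x => ∫ θ, T (x / θ) / T x ∂ν) atTop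
      (𝓝 ((∫ θ, m θ ∂ν) + 0)) := by
    have : (fun x => ∫ θ, T (x / θ) / T x ∂ν)
        = fun x => (∫ θ, f1 x θ ∂ν) + R x := by
      funext x
      rw [hRdef]
      ring
    rw [this]
    exact hDCT.add hR0
  rw [add_zero, hmint_val] at hsum
  refine Tendsto.congr' ?_ hsum
  filter_upwards with x
  rw [hkey x, ← integral_div]
end

section
/- Let X₁, X₂ be positive, identically distributed random variables with common regularly varying tail of index -α (α > 0) which are asymptotically independent, i.e. P[X₁ > x, X₂ > x]/P[X₁ > x] → 0 as x → ∞. Let Θ₁, Θ₂ be positive random variables independent of the pair (X₁, X₂) with E[Θ_t^α] < ∞, P[Θ_t > x] = o(P[X₁ > x]) for t = 1, 2, and suppose each pair (Θ_t, X_t) satisfies P[Θ_t X_t > x] ~ E[Θ_t^α] P[X₁ > x]. Then Θ₁X₁ and Θ₂X₂ are asymptotically independent: P[Θ₁X₁ > x, Θ₂X₂ > x] / P[Θ_t X_t > x] → 0 as x → ∞ for t = 1, 2. -/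
/-!
Write `T x = P[X₁ > x]` and `J x = P[X₁ > x, X₂ > x]`. On the event `{Θ₁X₁ > x, Θ₂X₂ > x}` both
`X₁` and `X₂` exceed `x / Θₜ` for the larger weight `Θₜ`, so independence bounds the joint tail by
`∫ J (x / Θ₁) + ∫ J (x / Θ₂)`. Each term is `o(T x)` by Pratt's lemma: `J (x / θ) / T x → 0`
pointwise, and it is dominated by `T (x / θ) / T x`, which tends to `θ ^ α` pointwise by regular
variation and in mean by the Breiman hypothesis. Since `P[Θₜ Xₜ > x] ~ E[Θₜ ^ α] T x` with
`E[Θₜ ^ α] > 0`, the joint tail is also `o(P[Θₜ Xₜ > x])`.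
-/

open MeasureTheory ProbabilityTheory Filter Real Topology Set
open scoped ENNReal

section Tendsto

variable {ι : Type*} {l : Filter ι}

theorem ENNReal.tendsto_div_of_tendsto_toReal_div {a b : ι → ℝ≥0∞} {c : ℝ}
    (ha : ∀ i, a i ≠ ⊤) (hb : ∀ i, b i ≠ 0)
    (h : Tendsto (fun i => (a i).toReal / (b i).toReal) l (𝓝 c)) :
    Tendsto (fun i => a i / b i) l (𝓝 (ENNReal.ofReal c)) :=
  (ENNReal.tendsto_ofReal h).congr fun i => by
    rw [← ENNReal.toReal_div, ENNReal.ofReal_toReal (ENNReal.div_ne_top (ha i) (hb i))]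

theorem ENNReal.tendsto_div_of_tendsto_toReal_div_const_mul {a b : ι → ℝ≥0∞} {c : ℝ≥0∞}
    (ha : ∀ i, a i ≠ ⊤) (hb : ∀ i, b i ≠ 0) (hc₀ : c ≠ 0) (hc : c ≠ ⊤)
    (h : Tendsto (fun i => (a i).toReal / (c.toReal * (b i).toReal)) l (𝓝 1)) :
    Tendsto (fun i => a i / b i) l (𝓝 c) := by
  have h' := ENNReal.tendsto_div_of_tendsto_toReal_div (b := fun i => c * b i) ha
    (fun i => mul_ne_zero hc₀ (hb i)) (by simpa only [ENNReal.toReal_mul] using h)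
  rw [ENNReal.ofReal_one] at h'
  simpa [← mul_div_assoc, ENNReal.mul_div_mul_left _ _ hc₀ hc] using
    ENNReal.Tendsto.const_mul h' (Or.inr hc)

theorem ENNReal.tendsto_toReal_div_of_tendsto_div {N D T : ι → ℝ≥0∞} {c : ℝ≥0∞}
    (hT₀ : ∀ i, T i ≠ 0) (hT : ∀ i, T i ≠ ⊤) (hN : Tendsto (fun i => N i / T i) l (𝓝 0))
    (hD : Tendsto (fun i => D i / T i) l (𝓝 c)) (hc : c ≠ 0) :
    Tendsto (fun i => (N i).toReal / (D i).toReal) l (𝓝 0) := by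
  have h := ENNReal.Tendsto.div hN (Or.inr hc) hD (Or.inr ENNReal.zero_ne_top)
  rw [ENNReal.zero_div] at h
  replace h := (ENNReal.tendsto_toReal ENNReal.zero_ne_top).comp h
  rw [ENNReal.toReal_zero] at h
  refine h.congr fun i => ?_
  rw [Function.comp_apply, div_eq_mul_inv (N i), div_eq_mul_inv (D i),
    ENNReal.mul_div_mul_right _ _ (ENNReal.inv_ne_zero.2 (hT i)) (ENNReal.inv_ne_top.2 (hT₀ i)),
    ENNReal.toReal_div]

end Tendsto

theorem Antitone.ne_zero_of_tendsto_div {T : ℝ → ℝ≥0∞} (hT : Antitone T) {u : ℝ → ℝ} {c : ℝ}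
    (hc : c ≠ 0) (h : Tendsto (fun x => u x / (T x).toReal) atTop (𝓝 c)) (x : ℝ) : T x ≠ 0 := by
  intro hx
  -- `u y / 0 = 0`, so the ratio would vanish beyond `x`
  refine hc (tendsto_nhds_unique h (tendsto_const_nhds.congr' ?_))
  filter_upwards [eventually_ge_atTop x] with y hy
  rw [nonpos_iff_eq_zero.1 ((hT hy).trans_eq hx), ENNReal.toReal_zero, div_zero]

section Measure

variable {Ω : Type*} [MeasurableSpace Ω] {μ : Measure Ω}

theorem tendsto_lintegral_zero_of_le_of_tendsto_lintegral {ι : Type*} {l : Filter ι}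
    [l.IsCountablyGenerated] {f g : ι → Ω → ℝ≥0∞} {F : Ω → ℝ≥0∞}
    (hf : ∀ i, Measurable (f i)) (hg : ∀ i, Measurable (g i)) (hgf : ∀ i, g i ≤ f i)
    (hf_lim : ∀ ω, Tendsto (fun i => f i ω) l (𝓝 (F ω)))
    (hg_lim : ∀ ω, Tendsto (fun i => g i ω) l (𝓝 0)) (hF : ∫⁻ ω, F ω ∂μ ≠ ⊤)
    (hf_int : Tendsto (fun i => ∫⁻ ω, f i ω ∂μ) l (𝓝 (∫⁻ ω, F ω ∂μ))) :
    Tendsto (fun i => ∫⁻ ω, g i ω ∂μ) l (𝓝 0) := by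
  rcases l.eq_or_neBot with rfl | _
  · exact tendsto_bot
  set h : ι → ℝ≥0∞ := fun i => ∫⁻ ω, f i ω - g i ω ∂μ
  have h_le : ∀ i, h i ≤ ∫⁻ ω, f i ω ∂μ := fun i => lintegral_mono fun ω => tsub_le_self
  have h_lim : Tendsto h l (𝓝 (∫⁻ ω, F ω ∂μ)) := by
    refine tendsto_of_le_liminf_of_limsup_le ?_ ?_
    · calc ∫⁻ ω, F ω ∂μ = ∫⁻ ω, liminf (fun i => f i ω - g i ω) l ∂μ :=
            lintegral_congr fun ω => by
              simpa using ((ENNReal.Tendsto.sub (hf_lim ω) (hg_lim ω)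
                (Or.inr ENNReal.zero_ne_top)).liminf_eq).symm
        _ ≤ liminf h l := lintegral_liminf_le fun i => (hf i).sub (hg i)
    · calc limsup h l ≤ limsup (fun i => ∫⁻ ω, f i ω ∂μ) l :=
            limsup_le_limsup (Eventually.of_forall h_le)
        _ = ∫⁻ ω, F ω ∂μ := hf_int.limsup_eq
  have h_add : ∀ i, ∫⁻ ω, f i ω ∂μ = h i + ∫⁻ ω, g i ω ∂μ := fun i => by
    rw [← lintegral_add_right _ (hg i)]
    exact lintegral_congr fun ω => (tsub_add_cancel_of_le (hgf i ω)).symm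
  have h_sub := ENNReal.Tendsto.sub hf_int h_lim (Or.inl hF)
  rw [tsub_self] at h_sub
  refine h_sub.congr' ?_
  filter_upwards [hf_int.eventually (eventually_lt_nhds hF.lt_top)] with i hi
  rw [h_add i, ENNReal.add_sub_cancel_left ((h_le i).trans_lt (h_add i ▸ hi)).ne]

theorem lintegral_ofReal_rpow_ne_zero [NeZero μ] {Θ : Ω → ℝ} (hΘ : Measurable Θ)
    (hΘpos : ∀ ω, 0 < Θ ω) (α : ℝ) :
    ∫⁻ ω, ENNReal.ofReal (Θ ω ^ α) ∂μ ≠ 0 := fun h => by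
  obtain ⟨ω, hω⟩ := ((lintegral_eq_zero_iff (hΘ.pow_const α).ennreal_ofReal).1 h).exists
  exact (ENNReal.ofReal_pos.2 (rpow_pos_of_pos (hΘpos ω) α)).ne' hω

theorem tendsto_lintegral_comp_div_div_zero {Θ : Ω → ℝ} (hΘ : Measurable Θ)
    (hΘpos : ∀ ω, 0 < Θ ω) {T J : ℝ → ℝ≥0∞} (hT : Measurable T) (hJ : Measurable J)
    (hT₀ : ∀ x, T x ≠ 0) (hT_top : ∀ x, T x ≠ ⊤) (hJT : J ≤ T) {α : ℝ}
    (hrv : ∀ t > 0, Tendsto (fun x => T (t * x) / T x) atTop (𝓝 (ENNReal.ofReal (t ^ (-α)))))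
    (hJ_lim : Tendsto (fun x => J x / T x) atTop (𝓝 0))
    (hmom : ∫⁻ ω, ENNReal.ofReal (Θ ω ^ α) ∂μ ≠ ⊤)
    (hbr : Tendsto (fun x => (∫⁻ ω, T (x / Θ ω) ∂μ) / T x) atTop
      (𝓝 (∫⁻ ω, ENNReal.ofReal (Θ ω ^ α) ∂μ))) :
    Tendsto (fun x => (∫⁻ ω, J (x / Θ ω) ∂μ) / T x) atTop (𝓝 0) := by
  have hdiv : ∀ (R : ℝ → ℝ≥0∞) x,
      ∫⁻ ω, R (x / Θ ω) / T x ∂μ = (∫⁻ ω, R (x / Θ ω) ∂μ) / T x := fun R x => by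
    simp_rw [div_eq_mul_inv _ (T x)]
    exact lintegral_mul_const' _ _ (ENNReal.inv_ne_top.2 (hT₀ x))
  have hT_lim : ∀ ω, Tendsto (fun x => T (x / Θ ω) / T x) atTop
      (𝓝 (ENNReal.ofReal (Θ ω ^ α))) := fun ω => by
    have h := hrv (Θ ω)⁻¹ (inv_pos.2 (hΘpos ω))
    rw [Real.inv_rpow (hΘpos ω).le, Real.rpow_neg (hΘpos ω).le, inv_inv] at h
    simpa only [inv_mul_eq_div] using h
  have hJ_lim' : ∀ ω, Tendsto (fun x => J (x / Θ ω) / T x) atTop (𝓝 0) := fun ω => by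
    have h := ENNReal.Tendsto.mul (hJ_lim.comp (tendsto_id.atTop_div_const (hΘpos ω)))
      (Or.inr ENNReal.ofReal_ne_top) (hT_lim ω) (Or.inr ENNReal.zero_ne_top)
    rw [zero_mul] at h
    -- `J (x / θ) / T x = J (x / θ) / T (x / θ) * (T (x / θ) / T x)`
    refine h.congr fun x => ?_
    simp only [Function.comp_apply, id, div_eq_mul_inv]
    rw [mul_assoc, ← mul_assoc (T _)⁻¹, ENNReal.inv_mul_cancel (hT₀ _) (hT_top _), one_mul]
  simp_rw [← hdiv] at hbr ⊢
  exact tendsto_lintegral_zero_of_le_of_tendsto_lintegral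
    (fun x => (hT.comp (measurable_const.div hΘ)).div_const _)
    (fun x => (hJ.comp (measurable_const.div hΘ)).div_const _)
    (fun x ω => ENNReal.div_le_div_right (hJT _) _) hT_lim hJ_lim' hmom hbr

theorem ProbabilityTheory.IndepFun.measure_mem_eq_lintegral {α β : Type*} [MeasurableSpace α]
    [MeasurableSpace β] [IsFiniteMeasure μ] {V : Ω → α} {Y : Ω → β} (hV : Measurable V)
    (hY : Measurable Y) (h : IndepFun V Y μ) {s : α → Set β}
    (hs : MeasurableSet {p : α × β | p.2 ∈ s p.1}) :
    μ {ω | Y ω ∈ s (V ω)} = ∫⁻ ω, μ (Y ⁻¹' s (V ω)) ∂μ := by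
  have hmap : μ.map (fun ω => (V ω, Y ω)) = (μ.map V).prod (μ.map Y) :=
    (indepFun_iff_map_prod_eq_prod_map_map hV.aemeasurable hY.aemeasurable).1 h
  calc μ {ω | Y ω ∈ s (V ω)} = μ.map (fun ω => (V ω, Y ω)) {p | p.2 ∈ s p.1} := by
        rw [Measure.map_apply (hV.prodMk hY) hs]; rfl
    _ = ∫⁻ ω, μ (Y ⁻¹' s (V ω)) ∂μ := by
        rw [hmap, Measure.prod_apply hs, lintegral_map (measurable_measure_prodMk_left hs) hV]
        exact lintegral_congr fun ω => Measure.map_apply hY (measurable_prodMk_left hs)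

theorem measure_mul_gt_eq_lintegral [IsFiniteMeasure μ] {Θ X : Ω → ℝ} (hΘ : Measurable Θ)
    (hΘpos : ∀ ω, 0 < Θ ω) (hX : Measurable X) (hind : IndepFun Θ X μ) (x : ℝ) :
    μ {ω | Θ ω * X ω > x} = ∫⁻ ω, μ {ω' | X ω' > x / Θ ω} ∂μ := by
  have hs : MeasurableSet {p : ℝ × ℝ | p.2 ∈ Ioi (x / p.1)} :=
    measurableSet_lt (measurable_const.div measurable_fst) measurable_snd
  have hset : {ω | Θ ω * X ω > x} = {ω | X ω ∈ Ioi (x / Θ ω)} := by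
    ext ω
    simp [div_lt_iff₀' (hΘpos ω)]
  rw [hset]
  exact hind.measure_mem_eq_lintegral (s := fun θ => Ioi (x / θ)) hΘ hX hs

theorem measure_mul_gt_and_mul_gt_le [IsFiniteMeasure μ] {X₁ X₂ Θ₁ Θ₂ : Ω → ℝ}
    (hX₁ : Measurable X₁) (hX₂ : Measurable X₂) (hΘ₁ : Measurable Θ₁) (hΘ₂ : Measurable Θ₂)
    (hΘ₁pos : ∀ ω, 0 < Θ₁ ω) (hΘ₂pos : ∀ ω, 0 < Θ₂ ω)
    (hind₁ : IndepFun Θ₁ (fun ω => (X₁ ω, X₂ ω)) μ)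
    (hind₂ : IndepFun Θ₂ (fun ω => (X₁ ω, X₂ ω)) μ) {x : ℝ} (hx : 0 ≤ x) :
    μ {ω | Θ₁ ω * X₁ ω > x ∧ Θ₂ ω * X₂ ω > x} ≤
      ∫⁻ ω, μ {ω' | X₁ ω' > x / Θ₁ ω ∧ X₂ ω' > x / Θ₁ ω} ∂μ +
        ∫⁻ ω, μ {ω' | X₁ ω' > x / Θ₂ ω ∧ X₂ ω' > x / Θ₂ ω} ∂μ := by
  have hs : MeasurableSet {p : ℝ × ℝ × ℝ | p.2 ∈ Ioi (x / p.1) ×ˢ Ioi (x / p.1)} :=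
    (measurableSet_lt (measurable_const.div measurable_fst) measurable_snd.fst).inter
      (measurableSet_lt (measurable_const.div measurable_fst) measurable_snd.snd)
  have hjoint : ∀ Θ : Ω → ℝ, Measurable Θ → IndepFun Θ (fun ω => (X₁ ω, X₂ ω)) μ →
      μ {ω | X₁ ω > x / Θ ω ∧ X₂ ω > x / Θ ω} =
        ∫⁻ ω, μ {ω' | X₁ ω' > x / Θ ω ∧ X₂ ω' > x / Θ ω} ∂μ :=
    fun Θ hΘ hind => hind.measure_mem_eq_lintegral (s := fun θ => Ioi (x / θ) ×ˢ Ioi (x / θ)) hΘ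
      (hX₁.prodMk hX₂) hs
  rw [← hjoint Θ₁ hΘ₁ hind₁, ← hjoint Θ₂ hΘ₂ hind₂]
  refine (measure_mono ?_).trans (measure_union_le _ _)
  rintro ω ⟨h₁, h₂⟩
  have e₁ : x / Θ₁ ω < X₁ ω := (div_lt_iff₀' (hΘ₁pos ω)).2 h₁
  have e₂ : x / Θ₂ ω < X₂ ω := (div_lt_iff₀' (hΘ₂pos ω)).2 h₂
  rcases le_total (Θ₁ ω) (Θ₂ ω) with h | h
  · exact Or.inr ⟨(div_le_div_of_nonneg_left hx (hΘ₁pos ω) h).trans_lt e₁, e₂⟩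
  · exact Or.inl ⟨e₁, (div_le_div_of_nonneg_left hx (hΘ₂pos ω) h).trans_lt e₂⟩

theorem tendsto_measure_mul_gt_and_mul_gt_div [IsFiniteMeasure μ] {X₁ X₂ Θ₁ Θ₂ : Ω → ℝ}
    (hX₁ : Measurable X₁) (hX₂ : Measurable X₂) (hΘ₁ : Measurable Θ₁) (hΘ₂ : Measurable Θ₂)
    (hΘ₁pos : ∀ ω, 0 < Θ₁ ω) (hΘ₂pos : ∀ ω, 0 < Θ₂ ω)
    (hind₁ : IndepFun Θ₁ (fun ω => (X₁ ω, X₂ ω)) μ)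
    (hind₂ : IndepFun Θ₂ (fun ω => (X₁ ω, X₂ ω)) μ) {T : ℝ → ℝ≥0∞}
    (h₁ : Tendsto (fun x => (∫⁻ ω, μ {ω' | X₁ ω' > x / Θ₁ ω ∧ X₂ ω' > x / Θ₁ ω} ∂μ) / T x)
      atTop (𝓝 0))
    (h₂ : Tendsto (fun x => (∫⁻ ω, μ {ω' | X₁ ω' > x / Θ₂ ω ∧ X₂ ω' > x / Θ₂ ω} ∂μ) / T x)
      atTop (𝓝 0)) :
    Tendsto (fun x => μ {ω | Θ₁ ω * X₁ ω > x ∧ Θ₂ ω * X₂ ω > x} / T x) atTop (𝓝 0) := by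
  refine tendsto_of_tendsto_of_tendsto_of_le_of_le' tendsto_const_nhds
    (by simpa [ENNReal.add_div] using h₁.add h₂) (Eventually.of_forall fun x => zero_le) ?_
  filter_upwards [eventually_ge_atTop 0] with x hx
  rw [← ENNReal.add_div]
  exact ENNReal.div_le_div_right
    (measure_mul_gt_and_mul_gt_le hX₁ hX₂ hΘ₁ hΘ₂ hΘ₁pos hΘ₂pos hind₁ hind₂ hx) _

end Measure

theorem stmt_3_general {Ω : Type*} [MeasurableSpace Ω] (μ : Measure Ω) [IsProbabilityMeasure μ]
    (X₁ X₂ Θ₁ Θ₂ : Ω → ℝ)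
    (hX₁ : Measurable X₁) (hX₂ : Measurable X₂) (hΘ₁ : Measurable Θ₁) (hΘ₂ : Measurable Θ₂)
    (hΘ₁pos : ∀ ω, 0 < Θ₁ ω) (hΘ₂pos : ∀ ω, 0 < Θ₂ ω)
    -- identically distributed
    (hid : IdentDistrib X₁ X₂ μ μ)
    (α : ℝ)
    -- common regularly varying tail of index -α
    (hrv : ∀ t > (0:ℝ),
      Tendsto (fun x => (μ {ω | X₁ ω > t * x}).toReal / (μ {ω | X₁ ω > x}).toReal)
        atTop (𝓝 (t ^ (-α))))
    -- asymptotic independence of X₁ and X₂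
    (hai : Tendsto (fun x => (μ {ω | X₁ ω > x ∧ X₂ ω > x}).toReal /
        (μ {ω | X₁ ω > x}).toReal) atTop (𝓝 0))
    -- (Θ₁, Θ₂) independent of (X₁, X₂)
    (hindep : IndepFun (fun ω => (Θ₁ ω, Θ₂ ω)) (fun ω => (X₁ ω, X₂ ω)) μ)
    -- moments
    (hmom₁ : ∫⁻ ω, ENNReal.ofReal (Θ₁ ω ^ α) ∂μ ≠ ⊤)
    (hmom₂ : ∫⁻ ω, ENNReal.ofReal (Θ₂ ω ^ α) ∂μ ≠ ⊤)
    -- Breiman-type asymptotics for each pair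
    (hbr₁ : Tendsto (fun x => (μ {ω | Θ₁ ω * X₁ ω > x}).toReal /
        ((∫⁻ ω, ENNReal.ofReal (Θ₁ ω ^ α) ∂μ).toReal * (μ {ω | X₁ ω > x}).toReal))
      atTop (𝓝 1))
    (hbr₂ : Tendsto (fun x => (μ {ω | Θ₂ ω * X₂ ω > x}).toReal /
        ((∫⁻ ω, ENNReal.ofReal (Θ₂ ω ^ α) ∂μ).toReal * (μ {ω | X₁ ω > x}).toReal))
      atTop (𝓝 1)) :
    Tendsto (fun x => (μ {ω | Θ₁ ω * X₁ ω > x ∧ Θ₂ ω * X₂ ω > x}).toReal /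
        (μ {ω | Θ₁ ω * X₁ ω > x}).toReal) atTop (𝓝 0) ∧
    Tendsto (fun x => (μ {ω | Θ₁ ω * X₁ ω > x ∧ Θ₂ ω * X₂ ω > x}).toReal /
        (μ {ω | Θ₂ ω * X₂ ω > x}).toReal) atTop (𝓝 0) := by
  set T : ℝ → ℝ≥0∞ := fun x => μ {ω | X₁ ω > x}
  set J : ℝ → ℝ≥0∞ := fun x => μ {ω | X₁ ω > x ∧ X₂ ω > x}
  have hT_anti : Antitone T := fun x y hxy => measure_mono fun ω hω => hxy.trans_lt hω
  have hJ_anti : Antitone J := fun x y hxy =>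
    measure_mono fun ω hω => ⟨hxy.trans_lt hω.1, hxy.trans_lt hω.2⟩
  have hT_top : ∀ x, T x ≠ ⊤ := fun x => measure_ne_top μ _
  have hT₀ : ∀ x, T x ≠ 0 := hT_anti.ne_zero_of_tendsto_div (by simp) (hrv 1 one_pos)
  have hJT : J ≤ T := fun x => measure_mono fun ω hω => hω.1
  have hT₂ : ∀ x, μ {ω | X₂ ω > x} = T x := fun x => (hid.measure_mem_eq measurableSet_Ioi).symm
  have hrvT : ∀ t > 0, Tendsto (fun x => T (t * x) / T x) atTop
      (𝓝 (ENNReal.ofReal (t ^ (-α)))) := fun t ht =>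
    ENNReal.tendsto_div_of_tendsto_toReal_div (fun x => hT_top _) hT₀ (hrv t ht)
  have hJ_lim := ENNReal.tendsto_div_of_tendsto_toReal_div (fun x => measure_ne_top μ _) hT₀ hai
  rw [ENNReal.ofReal_zero] at hJ_lim
  have hL₁ := lintegral_ofReal_rpow_ne_zero (μ := μ) hΘ₁ hΘ₁pos α
  have hL₂ := lintegral_ofReal_rpow_ne_zero (μ := μ) hΘ₂ hΘ₂pos α
  have hB₁ := ENNReal.tendsto_div_of_tendsto_toReal_div_const_mul (fun x => measure_ne_top μ _)
    hT₀ hL₁ hmom₁ hbr₁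
  have hB₂ := ENNReal.tendsto_div_of_tendsto_toReal_div_const_mul (fun x => measure_ne_top μ _)
    hT₀ hL₂ hmom₂ hbr₂
  have hN₁ := tendsto_lintegral_comp_div_div_zero hΘ₁ hΘ₁pos hT_anti.measurable
    hJ_anti.measurable hT₀ hT_top hJT hrvT hJ_lim hmom₁ (hB₁.congr fun x => by
      rw [measure_mul_gt_eq_lintegral hΘ₁ hΘ₁pos hX₁ (hindep.comp measurable_fst measurable_fst)])
  have hN₂ := tendsto_lintegral_comp_div_div_zero hΘ₂ hΘ₂pos hT_anti.measurable
    hJ_anti.measurable hT₀ hT_top hJT hrvT hJ_lim hmom₂ (hB₂.congr fun x => by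
      rw [measure_mul_gt_eq_lintegral hΘ₂ hΘ₂pos hX₂ (hindep.comp measurable_snd measurable_snd)]
      simp_rw [hT₂])
  have hN := tendsto_measure_mul_gt_and_mul_gt_div hX₁ hX₂ hΘ₁ hΘ₂ hΘ₁pos hΘ₂pos
    (hindep.comp measurable_fst measurable_id) (hindep.comp measurable_snd measurable_id) hN₁ hN₂
  exact ⟨ENNReal.tendsto_toReal_div_of_tendsto_div hT₀ hT_top hN hB₁ hL₁,
    ENNReal.tendsto_toReal_div_of_tendsto_div hT₀ hT_top hN hB₂ hL₂⟩

/-- asymptotic independence is preserved under multiplication by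
independent positive weights satisfying Breiman-type asymptotics. -/
theorem stmt_3 {Ω : Type*} [MeasurableSpace Ω] (μ : Measure Ω) [IsProbabilityMeasure μ]
    (X₁ X₂ Θ₁ Θ₂ : Ω → ℝ)
    (hX₁ : Measurable X₁) (hX₂ : Measurable X₂) (hΘ₁ : Measurable Θ₁) (hΘ₂ : Measurable Θ₂)
    (hX₁pos : ∀ ω, 0 < X₁ ω) (hX₂pos : ∀ ω, 0 < X₂ ω)
    (hΘ₁pos : ∀ ω, 0 < Θ₁ ω) (hΘ₂pos : ∀ ω, 0 < Θ₂ ω)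
    -- identically distributed
    (hid : IdentDistrib X₁ X₂ μ μ)
    (α : ℝ) (hα : 0 < α)
    -- common regularly varying tail of index -α
    (hrv : ∀ t > (0:ℝ),
      Tendsto (fun x => (μ {ω | X₁ ω > t * x}).toReal / (μ {ω | X₁ ω > x}).toReal)
        atTop (𝓝 (t ^ (-α))))
    -- asymptotic independence of X₁ and X₂
    (hai : Tendsto (fun x => (μ {ω | X₁ ω > x ∧ X₂ ω > x}).toReal /
        (μ {ω | X₁ ω > x}).toReal) atTop (𝓝 0))
    -- (Θ₁, Θ₂) independent of (X₁, X₂)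
    (hindep : IndepFun (fun ω => (Θ₁ ω, Θ₂ ω)) (fun ω => (X₁ ω, X₂ ω)) μ)
    -- moments
    (hmom₁ : ∫⁻ ω, ENNReal.ofReal (Θ₁ ω ^ α) ∂μ ≠ ⊤)
    (hmom₂ : ∫⁻ ω, ENNReal.ofReal (Θ₂ ω ^ α) ∂μ ≠ ⊤)
    -- P[Θ_t > x] = o(P[X₁ > x])
    (ho₁ : Tendsto (fun x => (μ {ω | Θ₁ ω > x}).toReal / (μ {ω | X₁ ω > x}).toReal)
      atTop (𝓝 0))
    (ho₂ : Tendsto (fun x => (μ {ω | Θ₂ ω > x}).toReal / (μ {ω | X₁ ω > x}).toReal)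
      atTop (𝓝 0))
    -- Breiman-type asymptotics for each pair
    (hbr₁ : Tendsto (fun x => (μ {ω | Θ₁ ω * X₁ ω > x}).toReal /
        ((∫⁻ ω, ENNReal.ofReal (Θ₁ ω ^ α) ∂μ).toReal * (μ {ω | X₁ ω > x}).toReal))
      atTop (𝓝 1))
    (hbr₂ : Tendsto (fun x => (μ {ω | Θ₂ ω * X₂ ω > x}).toReal /
        ((∫⁻ ω, ENNReal.ofReal (Θ₂ ω ^ α) ∂μ).toReal * (μ {ω | X₁ ω > x}).toReal))
      atTop (𝓝 1)) :
    Tendsto (fun x => (μ {ω | Θ₁ ω * X₁ ω > x ∧ Θ₂ ω * X₂ ω > x}).toReal /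
        (μ {ω | Θ₁ ω * X₁ ω > x}).toReal) atTop (𝓝 0) ∧
    Tendsto (fun x => (μ {ω | Θ₁ ω * X₁ ω > x ∧ Θ₂ ω * X₂ ω > x}).toReal /
        (μ {ω | Θ₂ ω * X₂ ω > x}).toReal) atTop (𝓝 0) :=
  stmt_3_general μ X₁ X₂ Θ₁ Θ₂ hX₁ hX₂ hΘ₁ hΘ₂ hΘ₁pos hΘ₂pos hid α hrv hai hindep hmom₁ hmom₂ hbr₁
    hbr₂
end

section
/- Let X be a random variable with regularly varying right tail of index -α, α > 0, satisfying P[X < -x]/P[X > x] → 0 as x → ∞. Let Θ be a positive random variable independent of X with E[Θ^α] < ∞, P[Θ > x] = o(P[X > x]), and suppose P[ΘX⁺ > x] ~ E[Θ^α] P[X > x] holds (Breiman asymptotics). Then for every u > 0, P[ΘX < -ux] / P[ΘX > x] → 0 as x → ∞. -/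
/-! Given θ > 0, the event θX < -x is the event X < -x/θ. Once x/θ exceeds a level y₀ beyond which
P[X < -y] ≤ ε P[X > y], this is at most ε P[θX > x]; otherwise bound it by 1. Integrating against
the law of the independent Θ gives P[ΘX < -x] ≤ ε P[ΘX > x] + P[Θ > x/y₀]. By Breiman's asymptotics
P[ΘX > x] is asymptotically a constant multiple of P[X > x], hence regularly varying of index -α
and of larger order than P[Θ > cx]; so the ratio is eventually below 2ε, and the scaling by u only
costs the factor u^(-α). -/

open MeasureTheory ProbabilityTheory Filter Real Topology Set
open scoped ENNReal

section RatioLimits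

variable {F D : ℝ → ℝ} {C : ℝ}

lemma tendsto_comp_mul_div_self_of_tendsto_div_const_mul
    (hDF : Tendsto (fun x => D x / (C * F x)) atTop (𝓝 1)) {c L : ℝ} (hc : 0 < c)
    (hF : Tendsto (fun x => F (c * x) / F x) atTop (𝓝 L)) :
    Tendsto (fun x => D (c * x) / D x) atTop (𝓝 L) := by
  have hDFc := hDF.comp (tendsto_id.const_mul_atTop hc)
  have hlim := (hDFc.mul hF).div hDF one_ne_zero
  rw [one_mul, div_one] at hlim
  refine hlim.congr' ?_
  -- a ratio tending to 1 is eventually nonzero, so `C`, `F x` and `F (c * x)` are nonzero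
  filter_upwards [hDF.eventually_ne one_ne_zero, hDFc.eventually_ne one_ne_zero] with x hx hcx
  simp only [Function.comp_apply, id, ne_eq, div_eq_zero_iff, mul_eq_zero, not_or] at hx hcx
  obtain ⟨-, hC, hFx⟩ := hx
  obtain ⟨-, -, hFcx⟩ := hcx
  simp only [Pi.div_apply, Function.comp_apply, id]
  field_simp

lemma tendsto_div_of_tendsto_div_const_mul {T : ℝ → ℝ}
    (hDF : Tendsto (fun x => D x / (C * F x)) atTop (𝓝 1))
    (hT : Tendsto (fun x => T x / F x) atTop (𝓝 0)) :
    Tendsto (fun x => T x / D x) atTop (𝓝 0) := by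
  have hlim := (hT.div hDF one_ne_zero).div_const C
  rw [zero_div, zero_div] at hlim
  refine hlim.congr' ?_
  filter_upwards [hDF.eventually_ne one_ne_zero] with x hx
  simp only [ne_eq, div_eq_zero_iff, mul_eq_zero, not_or] at hx
  obtain ⟨-, hC, hFx⟩ := hx
  simp only [Pi.div_apply]
  field_simp

end RatioLimits

lemma tendsto_comp_mul_div_of_tendsto_div {f g : ℝ → ℝ}
    (hfg : Tendsto (fun x => f x / g x) atTop (𝓝 0)) {c L : ℝ} (hc : 0 < c) (hL : L ≠ 0)
    (hg : Tendsto (fun x => g (c * x) / g x) atTop (𝓝 L)) :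
    Tendsto (fun x => f (c * x) / g x) atTop (𝓝 0) := by
  have hlim := (hfg.comp (tendsto_id.const_mul_atTop hc)).mul hg
  rw [zero_mul] at hlim
  refine hlim.congr' ?_
  filter_upwards [hg.eventually_ne hL] with x hx
  simp only [ne_eq, div_eq_zero_iff, not_or] at hx
  obtain ⟨hgcx, -⟩ := hx
  simp only [Function.comp_apply, id]
  field_simp

lemma mul_max_zero_gt_iff {θ y x : ℝ} (hθ : 0 ≤ θ) (hx : 0 ≤ x) :
    θ * max y 0 > x ↔ θ * y > x := by
  rcases le_total y 0 with hy | hy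
  · have := mul_nonpos_of_nonneg_of_nonpos hθ hy
    rw [max_eq_right hy, mul_zero]
    constructor <;> intro h <;> linarith
  · rw [max_eq_left hy]

section ProductTails

variable {Ω : Type*} [MeasurableSpace Ω] {μ : Measure Ω} {X Θ : Ω → ℝ}

lemma ProbabilityTheory.IndepFun.measure_setOf_eq_lintegral [IsFiniteMeasure μ]
    (hindep : IndepFun Θ X μ) (hΘ : Measurable Θ) (hX : Measurable X) {p : ℝ → ℝ → Prop}
    (hp : MeasurableSet {q : ℝ × ℝ | p q.1 q.2}) :
    μ {ω | p (Θ ω) (X ω)} = ∫⁻ θ, μ {ω | p θ (X ω)} ∂(μ.map Θ) := by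
  have hmap := (indepFun_iff_map_prod_eq_prod_map_map hΘ.aemeasurable hX.aemeasurable).mp hindep
  calc μ {ω | p (Θ ω) (X ω)} = μ.map (fun ω => (Θ ω, X ω)) {q | p q.1 q.2} :=
        (Measure.map_apply (hΘ.prodMk hX) hp).symm
    _ = ∫⁻ θ, μ.map X (Prod.mk θ ⁻¹' {q | p q.1 q.2}) ∂(μ.map Θ) := by
        rw [hmap, Measure.prod_apply hp]
    _ = ∫⁻ θ, μ {ω | p θ (X ω)} ∂(μ.map Θ) :=
        lintegral_congr fun θ => Measure.map_apply hX (measurable_prodMk_left hp)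

variable [IsProbabilityMeasure μ]

lemma measure_mul_lt_neg_le (hX : Measurable X) (hΘ : Measurable Θ) (hΘpos : ∀ ω, 0 < Θ ω)
    (hindep : IndepFun Θ X μ) {ε : ℝ≥0∞} (hε : ε ≠ ∞) {y₀ : ℝ} (hy₀ : 0 < y₀)
    (hleft : ∀ y ≥ y₀, μ {ω | X ω < -y} ≤ ε * μ {ω | X ω > y}) (a : ℝ) :
    μ {ω | Θ ω * X ω < -a} ≤ ε * μ {ω | Θ ω * X ω > a} + μ {ω | Θ ω > a / y₀} := by
  have hlt : MeasurableSet {q : ℝ × ℝ | q.1 * q.2 < -a} :=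
    measurableSet_lt (measurable_fst.mul measurable_snd) measurable_const
  have hgt : MeasurableSet {q : ℝ × ℝ | q.1 * q.2 > a} :=
    measurableSet_lt measurable_const (measurable_fst.mul measurable_snd)
  have hbound : ∀ᵐ θ ∂μ.map Θ, μ {ω | θ * X ω < -a} ≤
      ε * μ {ω | θ * X ω > a} + (Ioi (a / y₀)).indicator 1 θ := by
    have hpos : ∀ᵐ θ ∂μ.map Θ, 0 < θ :=
      (ae_map_iff hΘ.aemeasurable measurableSet_Ioi).mpr (ae_of_all _ hΘpos)
    filter_upwards [hpos] with θ hθ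
    rcases le_or_gt θ (a / y₀) with hθa | hθa
    · have hy : y₀ ≤ a / θ := by
        rw [le_div_iff₀ hθ, mul_comm]; exact (le_div_iff₀ hy₀).mp hθa
      calc μ {ω | θ * X ω < -a}
          ≤ μ {ω | X ω < -(a / θ)} := measure_mono fun ω (hω : θ * X ω < -a) =>
            show X ω < -(a / θ) by rw [← neg_div, lt_div_iff₀ hθ]; linarith
        _ ≤ ε * μ {ω | X ω > a / θ} := hleft _ hy
        _ ≤ ε * μ {ω | θ * X ω > a} := mul_le_mul_right (measure_mono
            fun ω (hω : a / θ < X ω) => show a < θ * X ω by rw [div_lt_iff₀ hθ] at hω; linarith) ε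
        _ ≤ _ := le_self_add
    · rw [indicator_of_mem (mem_Ioi.mpr hθa), Pi.one_apply]
      exact le_add_left prob_le_one
  calc μ {ω | Θ ω * X ω < -a}
      = ∫⁻ θ, μ {ω | θ * X ω < -a} ∂μ.map Θ :=
        hindep.measure_setOf_eq_lintegral hΘ hX (p := fun θ x => θ * x < -a) hlt
    _ ≤ ∫⁻ θ, (ε * μ {ω | θ * X ω > a} + (Ioi (a / y₀)).indicator 1 θ) ∂μ.map Θ :=
        lintegral_mono_ae hbound
    _ = ε * μ {ω | Θ ω * X ω > a} + μ {ω | Θ ω > a / y₀} := by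
        rw [lintegral_add_right _ (measurable_one.indicator measurableSet_Ioi),
          lintegral_const_mul' _ _ hε, lintegral_indicator_one measurableSet_Ioi,
          Measure.map_apply hΘ measurableSet_Ioi,
          ← hindep.measure_setOf_eq_lintegral hΘ hX (p := fun θ x => θ * x > a) hgt]
        rfl

lemma eventually_measure_lt_neg_le_ofReal_mul
    (hneg : Tendsto (fun x => (μ {ω | X ω < -x}).toReal / (μ {ω | X ω > x}).toReal)
      atTop (𝓝 0))
    (hright : ∀ᶠ x in atTop, μ {ω | X ω > x} ≠ 0) {ε : ℝ} (hε : 0 < ε) :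
    ∀ᶠ y in atTop, μ {ω | X ω < -y} ≤ ENNReal.ofReal ε * μ {ω | X ω > y} := by
  filter_upwards [hneg.eventually_lt_const hε, hright] with y hy hy0
  have hpos : 0 < (μ {ω | X ω > y}).toReal := ENNReal.toReal_pos hy0 (measure_ne_top _ _)
  rw [div_lt_iff₀ hpos] at hy
  rw [← ENNReal.toReal_le_toReal (measure_ne_top _ _)
    (ENNReal.mul_ne_top ENNReal.ofReal_ne_top (measure_ne_top _ _)),
    ENNReal.toReal_mul, ENNReal.toReal_ofReal hε.le]
  exact hy.le

lemma tendsto_measure_mul_lt_neg_div (hX : Measurable X) (hΘ : Measurable Θ)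
    (hΘpos : ∀ ω, 0 < Θ ω) (hindep : IndepFun Θ X μ)
    (hleft : ∀ ε > 0, ∀ᶠ y in atTop, μ {ω | X ω < -y} ≤ ENNReal.ofReal ε * μ {ω | X ω > y})
    (hΘtail : ∀ c > 0, Tendsto (fun x => (μ {ω | Θ ω > c * x}).toReal /
      (μ {ω | Θ ω * X ω > x}).toReal) atTop (𝓝 0)) :
    Tendsto (fun x => (μ {ω | Θ ω * X ω < -x}).toReal / (μ {ω | Θ ω * X ω > x}).toReal)
      atTop (𝓝 0) := by
  refine tendsto_order.2 ⟨fun b hb => Eventually.of_forall fun x => hb.trans_le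
    (div_nonneg ENNReal.toReal_nonneg ENNReal.toReal_nonneg), fun δ hδ => ?_⟩
  obtain ⟨y₁, hy₁⟩ := eventually_atTop.mp (hleft (δ / 2) (half_pos hδ))
  set y₀ := max y₁ 1
  have hy₀ : 0 < y₀ := lt_max_of_lt_right one_pos
  filter_upwards [(hΘtail y₀⁻¹ (inv_pos.mpr hy₀)).eventually_lt_const (half_pos hδ)]
    with x hx
  have hbound := measure_mul_lt_neg_le hX hΘ hΘpos hindep ENNReal.ofReal_ne_top hy₀
    (fun y hy => hy₁ y (le_of_max_le_left hy)) x
  rw [div_eq_inv_mul x y₀] at hbound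
  set D := (μ {ω | Θ ω * X ω > x}).toReal
  have hreal : (μ {ω | Θ ω * X ω < -x}).toReal ≤
      δ / 2 * D + (μ {ω | Θ ω > y₀⁻¹ * x}).toReal := by
    have := ENNReal.toReal_mono (by finiteness) hbound
    rwa [ENNReal.toReal_add (by finiteness) (by finiteness), ENNReal.toReal_mul,
      ENNReal.toReal_ofReal (half_pos hδ).le] at this
  calc (μ {ω | Θ ω * X ω < -x}).toReal / D
      ≤ (δ / 2 * D + (μ {ω | Θ ω > y₀⁻¹ * x}).toReal) / D :=
        div_le_div_of_nonneg_right hreal ENNReal.toReal_nonneg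
    _ = δ / 2 * (D / D) + (μ {ω | Θ ω > y₀⁻¹ * x}).toReal / D := by ring
    _ ≤ δ / 2 * 1 + (μ {ω | Θ ω > y₀⁻¹ * x}).toReal / D := by
        gcongr; exact div_self_le_one D
    _ < δ := by linarith

end ProductTails

theorem stmt_4_general {Ω : Type*} [MeasurableSpace Ω] (μ : Measure Ω) [IsProbabilityMeasure μ]
    (X Θ : Ω → ℝ) (hX : Measurable X) (hΘ : Measurable Θ)
    (hΘpos : ∀ ω, 0 < Θ ω)
    (α : ℝ)
    -- regularly varying right tail of index -α
    (hrv : ∀ t > (0:ℝ),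
      Tendsto (fun x => (μ {ω | X ω > t * x}).toReal / (μ {ω | X ω > x}).toReal)
        atTop (𝓝 (t ^ (-α))))
    -- negligible left tail
    (hneg : Tendsto (fun x => (μ {ω | X ω < -x}).toReal / (μ {ω | X ω > x}).toReal)
      atTop (𝓝 0))
    -- Θ independent of X
    (hindep : IndepFun Θ X μ)
    (ho : Tendsto (fun x => (μ {ω | Θ ω > x}).toReal / (μ {ω | X ω > x}).toReal)
      atTop (𝓝 0))
    -- Breiman asymptotics for Θ X⁺
    (hbr : Tendsto (fun x => (μ {ω | Θ ω * max (X ω) 0 > x}).toReal /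
        ((∫⁻ ω, ENNReal.ofReal (Θ ω ^ α) ∂μ).toReal * (μ {ω | X ω > x}).toReal))
      atTop (𝓝 1)) :
    ∀ u > (0:ℝ),
      Tendsto (fun x => (μ {ω | Θ ω * X ω < -(u * x)}).toReal /
        (μ {ω | Θ ω * X ω > x}).toReal) atTop (𝓝 0) := by
  intro u hu
  set D : ℝ → ℝ := fun x => (μ {ω | Θ ω * X ω > x}).toReal
  have hDF : Tendsto (fun x => D x /
      ((∫⁻ ω, ENNReal.ofReal (Θ ω ^ α) ∂μ).toReal * (μ {ω | X ω > x}).toReal)) atTop (𝓝 1) := by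
    refine hbr.congr' ?_
    filter_upwards [eventually_ge_atTop 0] with x hx
    simp only [D, mul_max_zero_gt_iff (hΘpos _).le hx]
  have hright : ∀ᶠ x in atTop, μ {ω | X ω > x} ≠ 0 :=
    (hDF.eventually_ne one_ne_zero).mono fun x hx h => hx (by simp [h])
  have hDrv : ∀ c > 0, Tendsto (fun x => D (c * x) / D x) atTop (𝓝 (c ^ (-α))) :=
    fun c hc => tendsto_comp_mul_div_self_of_tendsto_div_const_mul hDF hc (hrv c hc)
  have hΘtail : ∀ c > 0, Tendsto (fun x => (μ {ω | Θ ω > c * x}).toReal / D x) atTop (𝓝 0) :=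
    fun c hc => tendsto_comp_mul_div_of_tendsto_div (f := fun x => (μ {ω | Θ ω > x}).toReal)
      (tendsto_div_of_tendsto_div_const_mul hDF ho) hc (rpow_pos_of_pos hc _).ne' (hDrv c hc)
  exact tendsto_comp_mul_div_of_tendsto_div (f := fun x => (μ {ω | Θ ω * X ω < -x}).toReal)
    (tendsto_measure_mul_lt_neg_div hX hΘ hΘpos hindep
      (fun ε hε => eventually_measure_lt_neg_le_ofReal_mul hneg hright hε) hΘtail)
    hu (rpow_pos_of_pos hu _).ne' (hDrv u hu)

/-- negligibility of the left tail is inherited by the product `ΘX`. -/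
theorem stmt_4 {Ω : Type*} [MeasurableSpace Ω] (μ : Measure Ω) [IsProbabilityMeasure μ]
    (X Θ : Ω → ℝ) (hX : Measurable X) (hΘ : Measurable Θ)
    (hΘpos : ∀ ω, 0 < Θ ω)
    (α : ℝ) (hα : 0 < α)
    -- regularly varying right tail of index -α
    (hrv : ∀ t > (0:ℝ),
      Tendsto (fun x => (μ {ω | X ω > t * x}).toReal / (μ {ω | X ω > x}).toReal)
        atTop (𝓝 (t ^ (-α))))
    -- negligible left tail
    (hneg : Tendsto (fun x => (μ {ω | X ω < -x}).toReal / (μ {ω | X ω > x}).toReal)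
      atTop (𝓝 0))
    -- Θ independent of X
    (hindep : IndepFun Θ X μ)
    (hmom : ∫⁻ ω, ENNReal.ofReal (Θ ω ^ α) ∂μ ≠ ⊤)
    (ho : Tendsto (fun x => (μ {ω | Θ ω > x}).toReal / (μ {ω | X ω > x}).toReal)
      atTop (𝓝 0))
    -- Breiman asymptotics for Θ X⁺
    (hbr : Tendsto (fun x => (μ {ω | Θ ω * max (X ω) 0 > x}).toReal /
        ((∫⁻ ω, ENNReal.ofReal (Θ ω ^ α) ∂μ).toReal * (μ {ω | X ω > x}).toReal))
      atTop (𝓝 1)) :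
    ∀ u > (0:ℝ),
      Tendsto (fun x => (μ {ω | Θ ω * X ω < -(u * x)}).toReal /
        (μ {ω | Θ ω * X ω > x}).toReal) atTop (𝓝 0) :=
  stmt_4_general μ X Θ hX hΘ hΘpos α hrv hneg hindep ho hbr
end

section
/- Suppose Y₁, …, Y_k are nonnegative, pairwise asymptotically independent random variables each with regularly varying tail of common index -α, α > 0, and P[Y_t > x]/P[Y₁ > x] → c_t as x → ∞ for each t = 1, …, k. Then P[Y₁ + ⋯ + Y_k > x] / P[Y₁ > x] → c₁ + c₂ + ⋯ + c_k as x → ∞. -/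
open MeasureTheory ProbabilityTheory Filter Real Topology Set

lemma cancel2 {a b c : ℝ} (hb : b ≠ 0) : a / b * (b / c) = a / c := by
  rcases eq_or_ne c 0 with h | h
  · simp [h]
  · field_simp

lemma cancel3 {a b c d : ℝ} (hb : b ≠ 0) (hc : c ≠ 0) :
    a / b * (b / c * (c / d)) = a / d := by
  rw [cancel2 hc, cancel2 hb]

lemma bonf {Ω : Type*} [MeasurableSpace Ω] (μ : Measure Ω) [IsFiniteMeasure μ]
    {ι : Type*} [DecidableEq ι] (s : Finset ι) (A : ι → Set Ω)
    (hA : ∀ i, MeasurableSet (A i)) :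
    ∑ i ∈ s, (μ (A i)).toReal ≤ (μ (⋃ i ∈ s, A i)).toReal +
      ∑ i ∈ s, ∑ j ∈ s.erase i, (μ (A i ∩ A j)).toReal := by
  classical
  induction s using Finset.induction_on with
  | empty => simp
  | @insert a s ha ih =>
    have hU : MeasurableSet (⋃ i ∈ s, A i) := MeasurableSet.biUnion s.countable_toSet (fun i _ => hA i)
    have key : (μ (A a ∪ ⋃ i ∈ s, A i)).toReal + (μ (A a ∩ ⋃ i ∈ s, A i)).toReal
        = (μ (A a)).toReal + (μ (⋃ i ∈ s, A i)).toReal := by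
      rw [← ENNReal.toReal_add (measure_ne_top μ _) (measure_ne_top μ _),
          ← ENNReal.toReal_add (measure_ne_top μ _) (measure_ne_top μ _),
          measure_union_add_inter _ hU]
    have hsub : (μ (A a ∩ ⋃ i ∈ s, A i)).toReal ≤ ∑ j ∈ s, (μ (A a ∩ A j)).toReal := by
      have : A a ∩ ⋃ i ∈ s, A i = ⋃ i ∈ s, (A a ∩ A i) := by
        simp [inter_iUnion]
      rw [this]
      refine le_trans (ENNReal.toReal_mono ?_ (measure_biUnion_finset_le s _)) ?_
      · exact (ENNReal.sum_lt_top.2 fun i _ => (measure_lt_top μ _)).ne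
      · rw [ENNReal.toReal_sum (fun i _ => measure_ne_top μ _)]
    have hmono : ∀ i ∈ s, ∑ j ∈ s.erase i, (μ (A i ∩ A j)).toReal
        ≤ ∑ j ∈ (insert a s).erase i, (μ (A i ∩ A j)).toReal := by
      intro i hi
      exact Finset.sum_le_sum_of_subset_of_nonneg
        (Finset.erase_subset_erase _ (Finset.subset_insert _ _))
        (fun _ _ _ => ENNReal.toReal_nonneg)
    rw [Finset.sum_insert ha, Finset.sum_insert ha, Finset.erase_insert ha]
    have hunion : (⋃ i ∈ insert a s, A i) = A a ∪ ⋃ i ∈ s, A i := by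
      simp [Finset.set_biUnion_insert]
    rw [hunion]
    calc (μ (A a)).toReal + ∑ i ∈ s, (μ (A i)).toReal
        ≤ (μ (A a)).toReal + ((μ (⋃ i ∈ s, A i)).toReal +
            ∑ i ∈ s, ∑ j ∈ s.erase i, (μ (A i ∩ A j)).toReal) := by linarith [ih]
      _ ≤ (μ (A a ∪ ⋃ i ∈ s, A i)).toReal + ∑ j ∈ s, (μ (A a ∩ A j)).toReal +
            ∑ i ∈ s, ∑ j ∈ s.erase i, (μ (A i ∩ A j)).toReal := by linarith [key, hsub]
      _ ≤ (μ (A a ∪ ⋃ i ∈ s, A i)).toReal + (∑ j ∈ s, (μ (A a ∩ A j)).toReal +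
            ∑ i ∈ s, ∑ j ∈ (insert a s).erase i, (μ (A i ∩ A j)).toReal) := by
          have := Finset.sum_le_sum hmono
          linarith

/-- Davis–Resnick: under pairwise asymptotic independence, the tails of
regularly varying nonnegative random variables add up. -/
theorem stmt_5 {Ω : Type*} [MeasurableSpace Ω] (μ : Measure Ω) [IsProbabilityMeasure μ]
    (k : ℕ) (hk : 0 < k) (Y : Fin k → Ω → ℝ) (hY : ∀ t, Measurable (Y t))
    (hYnn : ∀ t ω, 0 ≤ Y t ω)
    (α : ℝ) (hα : 0 < α)
    -- each Y t has regularly varying tail of index -α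
    (hrv : ∀ t, ∀ u > (0:ℝ),
      Tendsto (fun x => (μ {ω | Y t ω > u * x}).toReal / (μ {ω | Y t ω > x}).toReal)
        atTop (𝓝 (u ^ (-α))))
    -- pairwise asymptotic independence
    (hai : ∀ s t, s ≠ t →
      Tendsto (fun x => (μ {ω | Y s ω > x ∧ Y t ω > x}).toReal /
        (μ {ω | Y s ω > x}).toReal) atTop (𝓝 0))
    (c : Fin k → ℝ)
    -- tail comparison with Y₁
    (hc : ∀ t, Tendsto (fun x => (μ {ω | Y t ω > x}).toReal /
        (μ {ω | Y ⟨0, hk⟩ ω > x}).toReal) atTop (𝓝 (c t))) :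
    Tendsto (fun x => (μ {ω | ∑ t, Y t ω > x}).toReal /
        (μ {ω | Y ⟨0, hk⟩ ω > x}).toReal) atTop (𝓝 (∑ t, c t)) := by
  classical
  -- eventual positivity of the tails
  have hpos : ∀ t, ∀ᶠ x in atTop, 0 < (μ {ω | Y t ω > x}).toReal := by
    intro t
    have h2 : ∀ᶠ x in atTop,
        0 < (μ {ω | Y t ω > 2 * x}).toReal / (μ {ω | Y t ω > x}).toReal :=
      (hrv t 2 two_pos).eventually (eventually_gt_nhds (by positivity))
    rw [eventually_atTop] at h2 ⊢
    obtain ⟨x₀, hx₀⟩ := h2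
    refine ⟨2 * x₀, fun y hy => ?_⟩
    have h := hx₀ (y / 2) (by linarith)
    have hnum : (μ {ω | Y t ω > 2 * (y / 2)}).toReal ≠ 0 := by
      intro h0
      rw [h0, zero_div] at h
      exact lt_irrefl 0 h
    have h2y : 2 * (y / 2) = y := by ring
    rw [h2y] at hnum
    exact lt_of_le_of_ne ENNReal.toReal_nonneg (Ne.symm hnum)
  have hFpos : ∀ᶠ x in atTop, 0 < (μ {ω | Y ⟨0, hk⟩ ω > x}).toReal := hpos ⟨0, hk⟩
  -- c is nonnegative
  have hcnn : ∀ t, 0 ≤ c t := fun t =>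
    ge_of_tendsto' (hc t) fun x => div_nonneg ENNReal.toReal_nonneg ENNReal.toReal_nonneg
  -- scaled tail limit
  have hscale : ∀ u : ℝ, 0 < u → ∀ t,
      Tendsto (fun x => (μ {ω | Y t ω > u * x}).toReal /
        (μ {ω | Y ⟨0, hk⟩ ω > x}).toReal) atTop (𝓝 (u ^ (-α) * c t)) := by
    intro u hu t
    refine ((hrv t u hu).mul (hc t)).congr' ?_
    filter_upwards [hpos t] with x hx
    exact cancel2 hx.ne'
  -- pair term limits
  have hpair : ∀ η : ℝ, 0 < η → ∀ s t, s ≠ t →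
      Tendsto (fun x => (μ {ω | Y s ω > η * x ∧ Y t ω > η * x}).toReal /
        (μ {ω | Y ⟨0, hk⟩ ω > x}).toReal) atTop (𝓝 0) := by
    intro η hη s t hst
    have hcomp : Tendsto (fun x : ℝ => η * x) atTop atTop :=
      Tendsto.const_mul_atTop hη tendsto_id
    have h0 := (hai s t hst).comp hcomp
    have h1 := hrv s η hη
    have htot := h0.mul (h1.mul (hc s))
    rw [zero_mul] at htot
    refine htot.congr' ?_
    filter_upwards [hcomp.eventually (hpos s), hpos s] with x h1' h2'
    exact cancel3 h1'.ne' h2'.ne'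
  refine tendsto_order.2 ⟨?_, ?_⟩
  · -- lower bound
    intro a ha
    have hLpair : Tendsto (fun x => ∑ t : Fin k, ∑ s ∈ Finset.univ.erase t,
        (μ {ω | Y t ω > x ∧ Y s ω > x}).toReal / (μ {ω | Y ⟨0, hk⟩ ω > x}).toReal)
        atTop (𝓝 0) := by
      have h := tendsto_finset_sum (Finset.univ : Finset (Fin k)) (fun t (_ : t ∈ Finset.univ) =>
        tendsto_finset_sum (Finset.univ.erase t) (fun s hs => by
          simpa using hpair 1 one_pos t s (Finset.ne_of_mem_erase hs).symm))
      simpa using h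
    have hL : Tendsto (fun x => ∑ t : Fin k,
        (μ {ω | Y t ω > x}).toReal / (μ {ω | Y ⟨0, hk⟩ ω > x}).toReal -
        ∑ t : Fin k, ∑ s ∈ Finset.univ.erase t,
        (μ {ω | Y t ω > x ∧ Y s ω > x}).toReal / (μ {ω | Y ⟨0, hk⟩ ω > x}).toReal)
        atTop (𝓝 (∑ t, c t)) := by
      have h := (tendsto_finset_sum Finset.univ (fun t (_ : t ∈ Finset.univ) => hc t)).sub hLpair
      simpa using h
    filter_upwards [hL.eventually (eventually_gt_nhds ha), hFpos] with x hx hF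
    refine hx.trans_le ?_
    have hA : ∀ i : Fin k, MeasurableSet {ω | Y i ω > x} := fun i =>
      measurableSet_lt measurable_const (hY i)
    have hbonf := bonf μ Finset.univ (fun i => {ω | Y i ω > x}) hA
    have hUsub : (μ (⋃ i ∈ Finset.univ, {ω | Y i ω > x})).toReal ≤
        (μ {ω | ∑ t, Y t ω > x}).toReal := by
      refine ENNReal.toReal_mono (measure_ne_top μ _) (measure_mono ?_)
      intro ω hω
      simp only [Finset.mem_univ, iUnion_true, mem_iUnion, mem_setOf_eq] at hω
      obtain ⟨t, ht⟩ := hω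
      have hle : Y t ω ≤ ∑ s, Y s ω :=
        Finset.single_le_sum (fun s _ => hYnn s ω) (Finset.mem_univ t)
      exact lt_of_lt_of_le ht hle
    have heq : ∀ t s : Fin k,
        ({ω | Y t ω > x} ∩ {ω | Y s ω > x}) = {ω | Y t ω > x ∧ Y s ω > x} := fun t s => rfl
    simp only [heq] at hbonf
    have hnum : ∑ t : Fin k, (μ {ω | Y t ω > x}).toReal -
        ∑ t : Fin k, ∑ s ∈ Finset.univ.erase t,
          (μ {ω | Y t ω > x ∧ Y s ω > x}).toReal
        ≤ (μ {ω | ∑ t, Y t ω > x}).toReal := by linarith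
    rw [← Finset.sum_div]
    have hdd : ∑ t : Fin k, ∑ s ∈ Finset.univ.erase t,
        (μ {ω | Y t ω > x ∧ Y s ω > x}).toReal / (μ {ω | Y ⟨0, hk⟩ ω > x}).toReal
        = (∑ t : Fin k, ∑ s ∈ Finset.univ.erase t,
          (μ {ω | Y t ω > x ∧ Y s ω > x}).toReal) / (μ {ω | Y ⟨0, hk⟩ ω > x}).toReal := by
      rw [Finset.sum_div]
      exact Finset.sum_congr rfl fun t _ => (Finset.sum_div _ _ _).symm
    rw [hdd, ← sub_div]
    exact (div_le_div_iff_of_pos_right hF).mpr hnum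
  · -- upper bound
    intro a ha
    -- choose δ ∈ (0,1) with (1-δ)^(-α) * ∑ c < a
    have hcont : ContinuousAt (fun δ : ℝ => (1 - δ) ^ (-α) * ∑ t, c t) 0 := by
      have h1 : ContinuousAt (fun δ : ℝ => (1 : ℝ) - δ) 0 :=
        (continuous_const.sub continuous_id).continuousAt
      exact (h1.rpow_const (Or.inl (by norm_num))).mul continuousAt_const
    have hev1 : ∀ᶠ δ in 𝓝 (0 : ℝ), (1 - δ) ^ (-α) * ∑ t, c t < a := by
      have h := hcont.tendsto
      have h00 : (1 - (0:ℝ)) ^ (-α) * ∑ t, c t = ∑ t, c t := by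
        norm_num
      rw [h00] at h
      exact h.eventually (eventually_lt_nhds ha)
    have hev2 : ∀ᶠ δ in 𝓝 (0 : ℝ), δ < 1 := eventually_lt_nhds one_pos
    obtain ⟨δ, ⟨hδa, hδ1⟩, hδ0⟩ : ∃ δ : ℝ,
        ((1 - δ) ^ (-α) * ∑ t, c t < a ∧ δ < 1) ∧ δ ∈ Ioi (0:ℝ) :=
      (((hev1.and hev2).filter_mono nhdsWithin_le_nhds).and
        eventually_mem_nhdsWithin).exists
    rw [mem_Ioi] at hδ0
    have hkR : (0 : ℝ) < k := by exact_mod_cast hk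
    set η : ℝ := δ / k with hηdef
    have hη : 0 < η := div_pos hδ0 hkR
    -- the upper bounding function and its limit
    have hU : Tendsto (fun x => ∑ t : Fin k,
        (μ {ω | Y t ω > (1 - δ) * x}).toReal / (μ {ω | Y ⟨0, hk⟩ ω > x}).toReal
        + ∑ t : Fin k, ∑ s ∈ Finset.univ.erase t,
          (μ {ω | Y t ω > η * x ∧ Y s ω > η * x}).toReal /
            (μ {ω | Y ⟨0, hk⟩ ω > x}).toReal)
        atTop (𝓝 ((1 - δ) ^ (-α) * ∑ t, c t)) := by
      have hA := tendsto_finset_sum (Finset.univ : Finset (Fin k))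
        (fun t (_ : t ∈ Finset.univ) => hscale (1 - δ) (by linarith) t)
      have hB := tendsto_finset_sum (Finset.univ : Finset (Fin k))
        (fun t (_ : t ∈ Finset.univ) =>
          tendsto_finset_sum (Finset.univ.erase t) (fun s hs =>
            hpair η hη t s (Finset.ne_of_mem_erase hs).symm))
      have h := hA.add hB
      simpa [Finset.mul_sum] using h
    filter_upwards [hU.eventually (eventually_lt_nhds hδa), hFpos,
      eventually_gt_atTop (0 : ℝ)] with x hUx hF hx
    refine lt_of_le_of_lt ?_ hUx
    -- arithmetic facts
    have hηx1 : ((k : ℝ) - 1) * (η * x) ≤ δ * x := by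
      have h1 : ((k : ℝ) - 1) / k ≤ 1 := by
        rw [div_le_one hkR]; linarith
      calc ((k : ℝ) - 1) * (η * x) = (((k : ℝ) - 1) / k) * (δ * x) := by
            rw [hηdef]; ring
        _ ≤ 1 * (δ * x) := by
            apply mul_le_mul_of_nonneg_right h1; positivity
        _ = δ * x := one_mul _
    have hηx2 : (k : ℝ) * (η * x) = δ * x := by
      rw [hηdef]; field_simp
    -- the inclusion
    have hincl : {ω | ∑ t, Y t ω > x} ⊆
        (⋃ t ∈ (Finset.univ : Finset (Fin k)), {ω | Y t ω > (1 - δ) * x}) ∪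
        ⋃ t ∈ (Finset.univ : Finset (Fin k)), ⋃ s ∈ Finset.univ.erase t,
          {ω | Y t ω > η * x ∧ Y s ω > η * x} := by
      intro ω hω
      simp only [mem_setOf_eq] at hω
      by_cases hpairω : ∃ t s, t ≠ s ∧ η * x < Y t ω ∧ η * x < Y s ω
      · obtain ⟨t, s, hts, h1, h2⟩ := hpairω
        refine Or.inr (mem_iUnion₂.2 ⟨t, Finset.mem_univ t, mem_iUnion₂.2
          ⟨s, Finset.mem_erase.2 ⟨hts.symm, Finset.mem_univ s⟩, ⟨h1, h2⟩⟩⟩)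
      · push_neg at hpairω
        by_cases hone : ∃ t₀, η * x < Y t₀ ω
        · obtain ⟨t₀, ht₀⟩ := hone
          refine Or.inl (mem_iUnion₂.2 ⟨t₀, Finset.mem_univ t₀, ?_⟩)
          show (1 - δ) * x < Y t₀ ω
          have hb : ∀ s ∈ Finset.univ.erase t₀, Y s ω ≤ η * x := fun s hs =>
            hpairω t₀ s (Finset.ne_of_mem_erase hs).symm ht₀
          have hrest : ∑ s ∈ Finset.univ.erase t₀, Y s ω ≤
              ((Finset.univ.erase t₀).card : ℝ) * (η * x) := by
            have := Finset.sum_le_card_nsmul _ _ _ hb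
            rwa [nsmul_eq_mul] at this
          have hcard : ((Finset.univ.erase t₀).card : ℝ) = (k : ℝ) - 1 := by
            rw [Finset.card_erase_of_mem (Finset.mem_univ t₀), Finset.card_univ,
              Fintype.card_fin, Nat.cast_sub hk, Nat.cast_one]
          rw [hcard] at hrest
          have hsum : Y t₀ ω + ∑ s ∈ Finset.univ.erase t₀, Y s ω = ∑ t, Y t ω :=
            Finset.add_sum_erase Finset.univ (fun t => Y t ω) (Finset.mem_univ t₀)
          nlinarith [hηx1]
        · push_neg at hone
          exfalso
          have hsum : ∑ t, Y t ω ≤ ((Finset.univ : Finset (Fin k)).card : ℝ) * (η * x) := by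
            have := Finset.sum_le_card_nsmul Finset.univ (fun t => Y t ω) (η * x)
              (fun t _ => hone t)
            rwa [nsmul_eq_mul] at this
          rw [Finset.card_univ, Fintype.card_fin] at hsum
          rw [hηx2] at hsum
          nlinarith
    -- from the inclusion to measures
    have hB2 : μ {ω | ∑ t, Y t ω > x} ≤
        (∑ t : Fin k, μ {ω | Y t ω > (1 - δ) * x}) +
        ∑ t : Fin k, ∑ s ∈ Finset.univ.erase t, μ {ω | Y t ω > η * x ∧ Y s ω > η * x} := by
      refine (measure_mono hincl).trans ((measure_union_le _ _).trans (add_le_add ?_ ?_))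
      · exact measure_biUnion_finset_le _ _
      · exact (measure_biUnion_finset_le _ _).trans
          (Finset.sum_le_sum fun t _ => measure_biUnion_finset_le _ _)
    have hBreal : (μ {ω | ∑ t, Y t ω > x}).toReal ≤
        ∑ t : Fin k, (μ {ω | Y t ω > (1 - δ) * x}).toReal +
        ∑ t : Fin k, ∑ s ∈ Finset.univ.erase t,
          (μ {ω | Y t ω > η * x ∧ Y s ω > η * x}).toReal := by
      have hne : ((∑ t : Fin k, μ {ω | Y t ω > (1 - δ) * x}) +
          ∑ t : Fin k, ∑ s ∈ Finset.univ.erase t,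
            μ {ω | Y t ω > η * x ∧ Y s ω > η * x}) ≠ ⊤ := by
        refine ENNReal.add_ne_top.2 ⟨?_, ?_⟩
        · exact (ENNReal.sum_lt_top.2 fun _ _ => measure_lt_top μ _).ne
        · exact (ENNReal.sum_lt_top.2 fun _ _ =>
            ENNReal.sum_lt_top.2 fun _ _ => measure_lt_top μ _).ne
      have h := ENNReal.toReal_mono hne hB2
      rw [ENNReal.toReal_add ((ENNReal.sum_lt_top.2 fun _ _ => measure_lt_top μ _).ne)
            ((ENNReal.sum_lt_top.2 fun _ _ =>
              ENNReal.sum_lt_top.2 fun _ _ => measure_lt_top μ _).ne),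
          ENNReal.toReal_sum (fun _ _ => measure_ne_top μ _),
          ENNReal.toReal_sum (fun _ _ =>
            (ENNReal.sum_lt_top.2 fun _ _ => measure_lt_top μ _).ne)] at h
      have heq2 : ∀ t : Fin k, (∑ s ∈ Finset.univ.erase t,
          μ {ω | Y t ω > η * x ∧ Y s ω > η * x}).toReal
          = ∑ s ∈ Finset.univ.erase t,
            (μ {ω | Y t ω > η * x ∧ Y s ω > η * x}).toReal := fun t =>
        ENNReal.toReal_sum fun _ _ => measure_ne_top μ _
      simp only [heq2] at h
      exact h
    -- divide by F x
    rw [← Finset.sum_div]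
    have hdd : ∑ t : Fin k, ∑ s ∈ Finset.univ.erase t,
        (μ {ω | Y t ω > η * x ∧ Y s ω > η * x}).toReal /
          (μ {ω | Y ⟨0, hk⟩ ω > x}).toReal
        = (∑ t : Fin k, ∑ s ∈ Finset.univ.erase t,
          (μ {ω | Y t ω > η * x ∧ Y s ω > η * x}).toReal) /
            (μ {ω | Y ⟨0, hk⟩ ω > x}).toReal := by
      rw [Finset.sum_div]
      exact Finset.sum_congr rfl fun t _ => (Finset.sum_div _ _ _).symm
    rw [hdd, ← add_div]
    exact (div_le_div_iff_of_pos_right hF).mpr hBreal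
end

section
/- Let X₁, …, X_m and Θ₁, …, Θ_m be positive random variables, m ≥ 2, and fix δ ∈ (1/2, 1). Then for any x > 0, P[∑_{t=1}^m Θ_t X_t > x] ≤ ∑_{t=1}^m P[Θ_t X_t > δx] + ∑∑_{1≤s≠t≤m} P[Θ_s X_s > ((1-δ)/(m-1)) x, Θ_t X_t > ((1-δ)/(m-1)) x]. -/
open MeasureTheory Filter Real Topology Set

/-- upper bound for the tail of a sum of positive random variables. -/
theorem stmt_10 {Ω : Type*} [MeasurableSpace Ω] (μ : Measure Ω) [IsProbabilityMeasure μ]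
    (m : ℕ) (hm : 2 ≤ m) (X Θ : ℕ → Ω → ℝ)
    (hX : ∀ t, Measurable (X t)) (hΘ : ∀ t, Measurable (Θ t))
    (hXpos : ∀ t ω, 0 < X t ω) (hΘpos : ∀ t ω, 0 < Θ t ω)
    (δ : ℝ) (hδ : 1 / 2 < δ) (hδ1 : δ < 1)
    (x : ℝ) (hx : 0 < x) :
    (μ {ω | ∑ t ∈ Finset.range m, Θ t ω * X t ω > x}).toReal ≤
      ∑ t ∈ Finset.range m, (μ {ω | Θ t ω * X t ω > δ * x}).toReal +
      ∑ s ∈ Finset.range m, ∑ t ∈ Finset.range m,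
        (if s ≠ t then
          (μ {ω | Θ s ω * X s ω > (1 - δ) / (m - 1 : ℝ) * x ∧
              Θ t ω * X t ω > (1 - δ) / (m - 1 : ℝ) * x}).toReal
        else 0) := by
  set c : ℝ := (1 - δ) / (m - 1 : ℝ) with hc
  set f : ℕ → Set Ω := fun t => {ω | Θ t ω * X t ω > δ * x} with hf
  set g : ℕ → ℕ → Set Ω := fun s t =>
    {ω | Θ s ω * X s ω > c * x ∧ Θ t ω * X t ω > c * x} with hg
  have hm1 : (1:ℝ) ≤ (m:ℝ) - 1 := by
    have : (2:ℝ) ≤ (m:ℝ) := by exact_mod_cast hm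
    linarith
  have hmpos : (0:ℝ) < (m:ℝ) := by linarith
  -- key inclusion
  have hsub : {ω | ∑ t ∈ Finset.range m, Θ t ω * X t ω > x} ⊆
      (⋃ t ∈ Finset.range m, f t) ∪
      (⋃ s ∈ Finset.range m, ⋃ t ∈ Finset.range m,
        (if s ≠ t then g s t else ∅)) := by
    intro ω hω
    simp only [Set.mem_setOf_eq] at hω
    by_cases h : ∃ t ∈ Finset.range m, Θ t ω * X t ω > δ * x
    · obtain ⟨t, ht, hgt⟩ := h
      exact Or.inl (Set.mem_biUnion ht hgt)
    · push_neg at h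
      -- all terms ≤ δ x; find t with term > x / m
      have h1 : ∃ t ∈ Finset.range m, x / m < Θ t ω * X t ω := by
        by_contra hcon
        push_neg at hcon
        have : ∑ t ∈ Finset.range m, Θ t ω * X t ω ≤ ∑ _t ∈ Finset.range m, x / m :=
          Finset.sum_le_sum fun i hi => hcon i hi
        rw [Finset.sum_const, Finset.card_range, nsmul_eq_mul] at this
        rw [mul_div_cancel₀ x (ne_of_gt hmpos)] at this
        linarith
      obtain ⟨t, ht, hgt⟩ := h1
      have hsum' : (1 - δ) * x < ∑ s ∈ Finset.range m \ {t}, Θ s ω * X s ω := by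
        have heq : ∑ s ∈ Finset.range m \ {t}, Θ s ω * X s ω
            = (∑ s ∈ Finset.range m, Θ s ω * X s ω) - Θ t ω * X t ω := by
          rw [Finset.sum_sdiff_eq_sub (Finset.singleton_subset_iff.mpr ht),
            Finset.sum_singleton]
        have hle := h t ht
        rw [heq]
        nlinarith
      have h2 : ∃ s ∈ Finset.range m \ {t}, c * x < Θ s ω * X s ω := by
        by_contra hcon
        push_neg at hcon
        have hsle : ∑ s ∈ Finset.range m \ {t}, Θ s ω * X s ω ≤
            ∑ _s ∈ Finset.range m \ {t}, c * x :=
          Finset.sum_le_sum fun i hi => hcon i hi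
        have hcard : (Finset.range m \ {t}).card = m - 1 := by
          rw [Finset.card_sdiff_of_subset (Finset.singleton_subset_iff.mpr ht),
            Finset.card_range, Finset.card_singleton]
        rw [Finset.sum_const, hcard, nsmul_eq_mul] at hsle
        have hcast : ((m - 1 : ℕ) : ℝ) = (m : ℝ) - 1 := by
          have : 1 ≤ m := by omega
          push_cast [this]; ring
        rw [hcast, hc] at hsle
        have heq2 : ((m:ℝ) - 1) * ((1 - δ) / ((m:ℝ) - 1) * x) = (1 - δ) * x := by
          field_simp
        rw [heq2] at hsle
        linarith
      obtain ⟨s, hs, hsgt⟩ := h2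
      have hsne : s ≠ t := by
        simp only [Finset.mem_sdiff, Finset.mem_singleton] at hs
        exact hs.2
      have hsmem : s ∈ Finset.range m := by
        simp only [Finset.mem_sdiff] at hs; exact hs.1
      -- term t also exceeds c * x since c ≤ 1/m
      have hcle : c * x ≤ x / m := by
        rw [hc, div_mul_eq_mul_div, div_le_div_iff₀ (by linarith) hmpos]
        have hδm : (1:ℝ) ≤ δ * m := by nlinarith
        nlinarith
      have htgt : c * x < Θ t ω * X t ω := lt_of_le_of_lt hcle hgt
      right
      refine Set.mem_biUnion hsmem (Set.mem_biUnion ht ?_)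
      rw [if_pos hsne]
      exact ⟨hsgt, htgt⟩
  -- ENNReal bound
  have key : μ {ω | ∑ t ∈ Finset.range m, Θ t ω * X t ω > x} ≤
      ∑ t ∈ Finset.range m, μ (f t) +
      ∑ s ∈ Finset.range m, ∑ t ∈ Finset.range m,
        μ (if s ≠ t then g s t else ∅) := by
    calc μ {ω | ∑ t ∈ Finset.range m, Θ t ω * X t ω > x}
        ≤ μ ((⋃ t ∈ Finset.range m, f t) ∪
            (⋃ s ∈ Finset.range m, ⋃ t ∈ Finset.range m,
              (if s ≠ t then g s t else ∅))) := measure_mono hsub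
      _ ≤ μ (⋃ t ∈ Finset.range m, f t) +
          μ (⋃ s ∈ Finset.range m, ⋃ t ∈ Finset.range m,
            (if s ≠ t then g s t else ∅)) := measure_union_le _ _
      _ ≤ _ := by
          gcongr
          · exact measure_biUnion_finset_le _ _
          · calc μ (⋃ s ∈ Finset.range m, ⋃ t ∈ Finset.range m,
                (if s ≠ t then g s t else ∅))
                ≤ ∑ s ∈ Finset.range m, μ (⋃ t ∈ Finset.range m,
                    (if s ≠ t then g s t else ∅)) := measure_biUnion_finset_le _ _
              _ ≤ _ := Finset.sum_le_sum fun s _ => measure_biUnion_finset_le _ _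
  have hinner : ∀ s : ℕ, ∑ t ∈ Finset.range m, μ (if s ≠ t then g s t else ∅) ≠ ⊤ :=
    fun s => (ENNReal.sum_lt_top.mpr fun j _ => measure_lt_top μ _).ne
  have htoReal := ENNReal.toReal_mono (by
    refine ENNReal.add_ne_top.mpr ⟨?_, ?_⟩
    · exact (ENNReal.sum_lt_top.mpr fun i _ => measure_lt_top μ _).ne
    · exact (ENNReal.sum_lt_top.mpr fun i _ => (hinner i).lt_top).ne) key
  rw [ENNReal.toReal_add (ENNReal.sum_lt_top.mpr fun i _ => measure_lt_top μ _).ne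
      (ENNReal.sum_lt_top.mpr fun i _ => (hinner i).lt_top).ne,
    ENNReal.toReal_sum (fun i _ => measure_ne_top μ _),
    ENNReal.toReal_sum (fun i _ => hinner i)] at htoReal
  refine le_trans htoReal (le_of_eq ?_)
  congr 1
  refine Finset.sum_congr rfl fun s _ => ?_
  rw [ENNReal.toReal_sum (fun j _ => measure_ne_top μ _)]
  refine Finset.sum_congr rfl fun t _ => ?_
  split_ifs with h
  · rfl
  · simp
end

section
/- Let (X₁, X₂) and (Θ₁, Θ₂) be independent random vectors with all coordinates positive. Suppose X₁ and X₂ are identically distributed, asymptotically independent, and there is a regularly varying function R of index -α (α > 0), bounded and bounded away from 0 on every bounded interval, with P[X₁ > x] ≤ R(x) for all x > 0. If E[Θ₁^{α+ε}] < ∞ and E[Θ₂^{α+ε}] < ∞ for some ε > 0, then P[Θ₁ X₁ > x, Θ₂ X₂ > x] / R(x) → 0 as x → ∞. -/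
/-!
Fix `m`. If both `Θᵢ < 2 ^ m`, the event forces `X₁, X₂ > x / 2 ^ m`, whose probability is
`o(R x)` by asymptotic independence and `R (x / 2 ^ m) ~ 2 ^ (m α) R x`. If `Θᵢ ≥ 2 ^ m`, cut
`Θᵢ` into dyadic shells `[2 ^ k, 2 ^ (k + 1))`; on the `k`-th shell independence and the Potter-type
bound `P[X > x / 2 ^ k] ≤ C 2 ^ (k (α + ε)) R x` give at most `R x` times the `k`-th term of a
dyadic sum for `𝔼[Θᵢ ^ (α + ε)] < ∞`. The tail of that sum from `m` on vanishes as `m → ∞`.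
-/

open MeasureTheory ProbabilityTheory Filter Real Topology Set

open scoped ENNReal

lemma tendsto_zero_of_le_add {α ι : Type*} {l : Filter α} {l' : Filter ι} [l'.NeBot]
    {f : α → ℝ} {g : ι → α → ℝ} {h : ι → ℝ} (hf : ∀ᶠ x in l, 0 ≤ f x)
    (hfg : ∀ᶠ i in l', ∀ᶠ x in l, f x ≤ g i x + h i) (hg : ∀ i, Tendsto (g i) l (𝓝 0))
    (hh : Tendsto h l' (𝓝 0)) : Tendsto f l (𝓝 0) := by
  refine tendsto_order.2 ⟨fun a ha => hf.mono fun x hx => ha.trans_le hx, fun b hb => ?_⟩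
  obtain ⟨i, hi, hfgi⟩ := ((hh.eventually_lt_const (half_pos hb)).and hfg).exists
  filter_upwards [hfgi, (hg i).eventually_lt_const (half_pos hb)] with x hx hgx
  linarith

lemma toReal_div_le_of_le_add_mul_ofReal {a b t : ℝ≥0∞} {c r : ℝ} (hb : b ≠ ⊤) (ht : t ≠ ⊤)
    (hc : 0 ≤ c) (hr : 0 < r) (h : a ≤ b + t * ENNReal.ofReal (c * r)) :
    a.toReal / r ≤ b.toReal / r + t.toReal * c := by
  have hne : t * ENNReal.ofReal (c * r) ≠ ⊤ := ENNReal.mul_ne_top ht ENNReal.ofReal_ne_top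
  have hle := ENNReal.toReal_mono (ENNReal.add_ne_top.2 ⟨hb, hne⟩) h
  rw [ENNReal.toReal_add hb hne, ENNReal.toReal_mul, ENNReal.toReal_ofReal (by positivity)] at hle
  rwa [div_le_iff₀ hr, add_mul, div_mul_cancel₀ _ hr.ne', mul_assoc]

lemma eventually_half_le_rpow_mul {R : ℝ → ℝ} {α β : ℝ} (hαβ : α < β) (hR : ∀ x, 0 < R x)
    (hlim : Tendsto (fun x => R (2⁻¹ * x) / R x) atTop (𝓝 (2⁻¹ ^ (-α)))) :
    ∀ᶠ x in atTop, R (x / 2) ≤ 2 ^ β * R x := by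
  have hlt : (2⁻¹ : ℝ) ^ (-α) < 2 ^ β := by
    rw [inv_rpow zero_le_two, ← rpow_neg zero_le_two, neg_neg]
    exact rpow_lt_rpow_of_exponent_lt one_lt_two hαβ
  filter_upwards [hlim.eventually_lt_const hlt] with x hx
  rw [div_lt_iff₀ (hR x), inv_mul_eq_div] at hx
  exact hx.le

-- Potter-type bound: halve `x` while `x ≥ 2 * N`; on `[N, 2 * N)` the crude bound `M` takes over.
lemma le_mul_two_pow_rpow_mul {R F : ℝ → ℝ} {β N M C : ℝ} (hβ : 0 ≤ β) (hC : 1 ≤ C)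
    (hR : ∀ x ≥ N, 0 ≤ R x) (hhalf : ∀ x ≥ 2 * N, R (x / 2) ≤ 2 ^ β * R x)
    (hFR : ∀ x ≥ N, F x ≤ R x) (hFM : ∀ y, F y ≤ M) (hMR : ∀ x ∈ Ico N (2 * N), M ≤ C * R x)
    (k : ℕ) {x : ℝ} (hx : N ≤ x) : F (x / 2 ^ k) ≤ C * ((2 : ℝ) ^ k) ^ β * R x := by
  induction k generalizing x with
  | zero => simpa using (hFR x hx).trans (le_mul_of_one_le_left (hR x hx) hC)
  | succ k ih =>
    have hpow : ((2 : ℝ) ^ (k + 1)) ^ β = ((2 : ℝ) ^ k) ^ β * 2 ^ β := by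
      rw [pow_succ, mul_rpow (by positivity) zero_le_two]
    by_cases hx2 : 2 * N ≤ x
    · calc F (x / 2 ^ (k + 1)) = F (x / 2 / 2 ^ k) := by rw [pow_succ', div_div]
        _ ≤ C * ((2 : ℝ) ^ k) ^ β * R (x / 2) := ih (by linarith)
        _ ≤ C * ((2 : ℝ) ^ k) ^ β * (2 ^ β * R x) :=
          mul_le_mul_of_nonneg_left (hhalf x hx2) (by positivity)
        _ = C * ((2 : ℝ) ^ (k + 1)) ^ β * R x := by rw [hpow]; ring
    · calc F (x / 2 ^ (k + 1)) ≤ M := hFM _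
        _ ≤ C * R x := hMR x ⟨hx, not_le.1 hx2⟩
        _ ≤ C * ((2 : ℝ) ^ (k + 1)) ^ β * R x := by
          rw [mul_assoc]
          refine mul_le_mul_of_nonneg_left (le_mul_of_one_le_left (hR x hx) ?_) (by linarith)
          exact one_le_rpow (one_le_pow₀ one_le_two) hβ

lemma exists_measure_gt_div_two_pow_le {Ω : Type*} [MeasurableSpace Ω] {μ : Measure Ω}
    [IsProbabilityMeasure μ] {X : Ω → ℝ} {R : ℝ → ℝ} {α β : ℝ} (hαβ : α < β) (hβ : 0 ≤ β)
    (hR : ∀ x, 0 < R x) (hlim : Tendsto (fun x => R (2⁻¹ * x) / R x) atTop (𝓝 (2⁻¹ ^ (-α))))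
    (hRlow : ∀ K > (0 : ℝ), ∃ c > (0 : ℝ), ∀ x ∈ Icc (-K) K, c ≤ R x)
    (hdom : ∀ x > (0 : ℝ), (μ {ω | X ω > x}).toReal ≤ R x) :
    ∃ N C : ℝ, 0 ≤ C ∧ ∀ x ≥ N, ∀ k : ℕ,
      μ (X ⁻¹' Ioi (x / 2 ^ k)) ≤
        ENNReal.ofReal (((2 : ℝ) ^ k) ^ β) * ENNReal.ofReal (C * R x) := by
  obtain ⟨N₀, hN₀⟩ := eventually_atTop.1 (eventually_half_le_rpow_mul hαβ hR hlim)
  set N := max N₀ 1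
  have hN : 0 < N := lt_max_of_lt_right one_pos
  obtain ⟨c, hc, hcR⟩ := hRlow (2 * N) (by positivity)
  refine ⟨N, max 1 c⁻¹, by positivity, fun x hx k => ?_⟩
  have hF := le_mul_two_pow_rpow_mul (F := fun y => (μ {ω | X ω > y}).toReal) (M := 1) hβ
    (le_max_left _ _) (fun x _ => (hR x).le)
    (fun x hx => hN₀ x (by linarith [le_max_left N₀ 1]))
    (fun x hx => hdom x (hN.trans_le hx))
    (fun y => by simpa using ENNReal.toReal_mono ENNReal.one_ne_top prob_le_one)
    (fun x hx => calc (1 : ℝ) = c⁻¹ * c := (inv_mul_cancel₀ hc.ne').symm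
        _ ≤ max 1 c⁻¹ * R x := mul_le_mul (le_max_right _ _)
          (hcR x ⟨by linarith [hx.1], hx.2.le⟩) hc.le (by positivity))
    k hx
  rw [← ENNReal.ofReal_mul (by positivity),
    ENNReal.le_ofReal_iff_toReal_le (measure_ne_top _ _) (by positivity [hR x])]
  exact hF.trans_eq (by ring)

lemma exists_mem_Ico_two_pow_add {θ : ℝ} {m : ℕ} (h : 2 ^ m ≤ θ) :
    ∃ j : ℕ, θ ∈ Ico ((2 : ℝ) ^ (j + m)) (2 ^ (j + m + 1)) := by
  have hm : (0 : ℝ) < 2 ^ m := by positivity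
  obtain ⟨j, hj₁, hj₂⟩ := exists_nat_pow_near ((one_le_div hm).2 h) one_lt_two
  refine ⟨j, ?_, ?_⟩
  · rwa [pow_add, ← le_div_iff₀ hm]
  · rwa [add_right_comm, pow_add, ← div_lt_iff₀ hm]

section Shells

variable {Ω : Type*} [MeasurableSpace Ω] (μ : Measure Ω) (Θ : Ω → ℝ) (β : ℝ)

/-- The `k`-th term of a dyadic upper sum for `𝔼[Θ ^ β]` over `{Θ ≥ 1}`. -/
noncomputable def dyadicMomentTerm (k : ℕ) : ℝ≥0∞ :=
  μ (Θ ⁻¹' Ico (2 ^ k) (2 ^ (k + 1))) * ENNReal.ofReal (((2 : ℝ) ^ (k + 1)) ^ β)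

variable {μ Θ β}

lemma tsum_dyadicMomentTerm_le (hΘ : Measurable Θ) (hβ : 0 ≤ β) :
    ∑' k, dyadicMomentTerm μ Θ β k ≤
      ENNReal.ofReal (2 ^ β) * ∫⁻ ω, ENNReal.ofReal (Θ ω ^ β) ∂μ := by
  set S : ℕ → Set Ω := fun k => Θ ⁻¹' Ico (2 ^ k) (2 ^ (k + 1))
  have hS : ∀ k, MeasurableSet (S k) := fun k => hΘ measurableSet_Ico
  have hdisj : Pairwise (Function.onFun Disjoint S) := fun i j hij =>
    ((pow_right_mono₀ one_le_two).pairwise_disjoint_on_Ico_succ hij).preimage Θ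
  have hterm : ∀ k, dyadicMomentTerm μ Θ β k ≤
      ENNReal.ofReal (2 ^ β) * ∫⁻ ω in S k, ENNReal.ofReal (Θ ω ^ β) ∂μ := fun k => by
    have hpow : ((2 : ℝ) ^ (k + 1)) ^ β = 2 ^ β * ((2 : ℝ) ^ k) ^ β := by
      rw [pow_succ, mul_rpow (by positivity) zero_le_two, mul_comm]
    calc dyadicMomentTerm μ Θ β k
        = ENNReal.ofReal (2 ^ β) * ∫⁻ _ in S k, ENNReal.ofReal (((2 : ℝ) ^ k) ^ β) ∂μ := by
          rw [dyadicMomentTerm, setLIntegral_const, hpow, ENNReal.ofReal_mul (by positivity)]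
          ring
      _ ≤ ENNReal.ofReal (2 ^ β) * ∫⁻ ω in S k, ENNReal.ofReal (Θ ω ^ β) ∂μ :=
          mul_le_mul_right (setLIntegral_mono' (hS k) fun ω hω =>
            ENNReal.ofReal_le_ofReal (rpow_le_rpow (by positivity) hω.1 hβ)) _
  calc ∑' k, dyadicMomentTerm μ Θ β k
      ≤ ∑' k, ENNReal.ofReal (2 ^ β) * ∫⁻ ω in S k, ENNReal.ofReal (Θ ω ^ β) ∂μ :=
        ENNReal.tsum_le_tsum hterm
    _ = ENNReal.ofReal (2 ^ β) * ∫⁻ ω in ⋃ k, S k, ENNReal.ofReal (Θ ω ^ β) ∂μ := by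
        rw [ENNReal.tsum_mul_left, lintegral_iUnion hS hdisj]
    _ ≤ ENNReal.ofReal (2 ^ β) * ∫⁻ ω, ENNReal.ofReal (Θ ω ^ β) ∂μ :=
        mul_le_mul_right (setLIntegral_le_lintegral _ _) _

lemma tendsto_tsum_dyadicMomentTerm_add (hΘ : Measurable Θ) (hβ : 0 ≤ β)
    (hmom : ∫⁻ ω, ENNReal.ofReal (Θ ω ^ β) ∂μ ≠ ⊤) :
    Tendsto (fun m => ∑' j, dyadicMomentTerm μ Θ β (j + m)) atTop (𝓝 0) :=
  ENNReal.tendsto_sum_nat_add _ <| ne_top_of_le_ne_top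
    (ENNReal.mul_ne_top ENNReal.ofReal_ne_top hmom) (tsum_dyadicMomentTerm_le hΘ hβ)

lemma measure_two_pow_le_and_lt_mul_le {X : Ω → ℝ} (hind : IndepFun Θ X μ) (hX : ∀ ω, 0 ≤ X ω)
    {x : ℝ} {r : ℝ≥0∞}
    (htail : ∀ k : ℕ, μ (X ⁻¹' Ioi (x / 2 ^ k)) ≤ ENNReal.ofReal (((2 : ℝ) ^ k) ^ β) * r)
    (m : ℕ) :
    μ {ω | 2 ^ m ≤ Θ ω ∧ x < Θ ω * X ω} ≤ (∑' j, dyadicMomentTerm μ Θ β (j + m)) * r := by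
  have hcover : {ω | 2 ^ m ≤ Θ ω ∧ x < Θ ω * X ω} ⊆
      ⋃ j : ℕ, Θ ⁻¹' Ico (2 ^ (j + m)) (2 ^ (j + m + 1)) ∩ X ⁻¹' Ioi (x / 2 ^ (j + m + 1)) := by
    rintro ω ⟨hm, hx⟩
    obtain ⟨j, hj⟩ := exists_mem_Ico_two_pow_add hm
    refine mem_iUnion.2 ⟨j, hj, ?_⟩
    rw [mem_preimage, mem_Ioi, div_lt_iff₀ (by positivity), mul_comm]
    exact hx.trans_le (mul_le_mul_of_nonneg_right hj.2.le (hX ω))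
  calc μ {ω | 2 ^ m ≤ Θ ω ∧ x < Θ ω * X ω}
      ≤ ∑' j : ℕ, μ (Θ ⁻¹' Ico (2 ^ (j + m)) (2 ^ (j + m + 1)) ∩
          X ⁻¹' Ioi (x / 2 ^ (j + m + 1))) := (measure_mono hcover).trans (measure_iUnion_le _)
    _ ≤ ∑' j, dyadicMomentTerm μ Θ β (j + m) * r := by
        gcongr with j
        rw [indepFun_iff_measure_inter_preimage_eq_mul.1 hind _ _ measurableSet_Ico
          measurableSet_Ioi, dyadicMomentTerm, mul_assoc]
        gcongr
        exact htail _
    _ = (∑' j, dyadicMomentTerm μ Θ β (j + m)) * r := ENNReal.tsum_mul_right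

end Shells

lemma setOf_mul_gt_subset {Ω : Type*} {X₁ X₂ Θ₁ Θ₂ : Ω → ℝ} (hX₁ : ∀ ω, 0 ≤ X₁ ω)
    (hX₂ : ∀ ω, 0 ≤ X₂ ω) (x : ℝ) (m : ℕ) :
    {ω | Θ₁ ω * X₁ ω > x ∧ Θ₂ ω * X₂ ω > x} ⊆ {ω | X₁ ω > x / 2 ^ m ∧ X₂ ω > x / 2 ^ m} ∪
      ({ω | 2 ^ m ≤ Θ₁ ω ∧ x < Θ₁ ω * X₁ ω} ∪ {ω | 2 ^ m ≤ Θ₂ ω ∧ x < Θ₂ ω * X₂ ω}) := by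
  have hdiv : ∀ {θ ξ : ℝ}, 0 ≤ ξ → x < θ * ξ → θ < 2 ^ m → x / 2 ^ m < ξ := fun hξ hx hθ => by
    rw [div_lt_iff₀ (by positivity), mul_comm]
    exact hx.trans_le (mul_le_mul_of_nonneg_right hθ.le hξ)
  rintro ω ⟨h₁, h₂⟩
  by_cases hΘ₁ : 2 ^ m ≤ Θ₁ ω
  · exact Or.inr (Or.inl ⟨hΘ₁, h₁⟩)
  by_cases hΘ₂ : 2 ^ m ≤ Θ₂ ω
  · exact Or.inr (Or.inr ⟨hΘ₂, h₂⟩)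
  exact Or.inl ⟨hdiv (hX₁ ω) h₁ (not_le.1 hΘ₁), hdiv (hX₂ ω) h₂ (not_le.1 hΘ₂)⟩

lemma measure_mul_gt_le {Ω : Type*} [MeasurableSpace Ω] {μ : Measure Ω}
    {X₁ X₂ Θ₁ Θ₂ : Ω → ℝ} (hX₁ : ∀ ω, 0 ≤ X₁ ω) (hX₂ : ∀ ω, 0 ≤ X₂ ω)
    (hind₁ : IndepFun Θ₁ X₁ μ) (hind₂ : IndepFun Θ₂ X₂ μ) {β x : ℝ} {r : ℝ≥0∞}
    (htail₁ : ∀ k : ℕ, μ (X₁ ⁻¹' Ioi (x / 2 ^ k)) ≤ ENNReal.ofReal (((2 : ℝ) ^ k) ^ β) * r)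
    (htail₂ : ∀ k : ℕ, μ (X₂ ⁻¹' Ioi (x / 2 ^ k)) ≤ ENNReal.ofReal (((2 : ℝ) ^ k) ^ β) * r)
    (m : ℕ) :
    μ {ω | Θ₁ ω * X₁ ω > x ∧ Θ₂ ω * X₂ ω > x} ≤ μ {ω | X₁ ω > x / 2 ^ m ∧ X₂ ω > x / 2 ^ m} +
      (∑' j, dyadicMomentTerm μ Θ₁ β (j + m) + ∑' j, dyadicMomentTerm μ Θ₂ β (j + m)) * r := by
  grw [setOf_mul_gt_subset hX₁ hX₂ x m, measure_union_le, measure_union_le,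
    measure_two_pow_le_and_lt_mul_le hind₁ hX₁ htail₁,
    measure_two_pow_le_and_lt_mul_le hind₂ hX₂ htail₂, add_mul]

lemma tendsto_measure_gt_div_div {Ω : Type*} [MeasurableSpace Ω] {μ : Measure Ω}
    [IsFiniteMeasure μ] {X₁ X₂ : Ω → ℝ} {R : ℝ → ℝ} {a c : ℝ} (hc : 0 < c)
    (hai : Tendsto (fun x => (μ {ω | X₁ ω > x ∧ X₂ ω > x}).toReal /
        (μ {ω | X₁ ω > x}).toReal) atTop (𝓝 0))
    (hR : ∀ x, 0 < R x) (hRc : Tendsto (fun x => R (c⁻¹ * x) / R x) atTop (𝓝 a))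
    (hdom : ∀ x > (0 : ℝ), (μ {ω | X₁ ω > x}).toReal ≤ R x) :
    Tendsto (fun x => (μ {ω | X₁ ω > x / c ∧ X₂ ω > x / c}).toReal / R x) atTop (𝓝 0) := by
  have hlim : Tendsto (fun x => (μ {ω | X₁ ω > x / c ∧ X₂ ω > x / c}).toReal /
      (μ {ω | X₁ ω > x / c}).toReal * (R (x / c) / R x)) atTop (𝓝 0) := by
    simpa [inv_mul_eq_div] using (hai.comp (tendsto_id.atTop_div_const hc)).mul hRc
  refine squeeze_zero' (Eventually.of_forall fun x => div_nonneg ENNReal.toReal_nonneg (hR x).le)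
    ?_ hlim
  filter_upwards [eventually_gt_atTop 0] with x hx
  set J := (μ {ω | X₁ ω > x / c ∧ X₂ ω > x / c}).toReal
  set F := (μ {ω | X₁ ω > x / c}).toReal
  have hJF : J ≤ F := ENNReal.toReal_mono (measure_ne_top _ _) (measure_mono fun ω hω => hω.1)
  calc J / R x = J / F * F / R x := by
        rw [div_mul_cancel_of_imp fun hF => le_antisymm (hJF.trans hF.le) ENNReal.toReal_nonneg]
    _ ≤ J / F * R (x / c) / R x := by
        gcongr
        · exact (hR x).le
        · exact hdom _ (div_pos hx hc)
    _ = J / F * (R (x / c) / R x) := mul_div_assoc _ _ _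

theorem stmt_12_general {Ω : Type*} [MeasurableSpace Ω] (μ : Measure Ω) [IsProbabilityMeasure μ]
    (X₁ X₂ Θ₁ Θ₂ : Ω → ℝ)
    (hΘ₁ : Measurable Θ₁) (hΘ₂ : Measurable Θ₂)
    (hX₁pos : ∀ ω, 0 < X₁ ω) (hX₂pos : ∀ ω, 0 < X₂ ω)
    -- (X₁, X₂) independent of (Θ₁, Θ₂)
    (hindep : IndepFun (fun ω => (X₁ ω, X₂ ω)) (fun ω => (Θ₁ ω, Θ₂ ω)) μ)
    -- identically distributed
    (hid : IdentDistrib X₁ X₂ μ μ)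
    -- asymptotic independence
    (hai : Tendsto (fun x => (μ {ω | X₁ ω > x ∧ X₂ ω > x}).toReal /
        (μ {ω | X₁ ω > x}).toReal) atTop (𝓝 0))
    (α : ℝ) (hα : 0 < α)
    (R : ℝ → ℝ)
    -- R regularly varying of index -α
    (hRrv : ∀ t > (0:ℝ), Tendsto (fun x => R (t * x) / R x) atTop (𝓝 (t ^ (-α))))
    -- R bounded and bounded away from 0 on every bounded interval
    (hRblw : ∀ K > (0:ℝ), ∃ c > (0:ℝ), ∀ x ∈ Icc (-K) K, c ≤ R x)
    -- domination
    (hdom : ∀ x > (0:ℝ), (μ {ω | X₁ ω > x}).toReal ≤ R x)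
    (ε : ℝ) (hε : 0 < ε)
    (hmom₁ : ∫⁻ ω, ENNReal.ofReal (Θ₁ ω ^ (α + ε)) ∂μ ≠ ⊤)
    (hmom₂ : ∫⁻ ω, ENNReal.ofReal (Θ₂ ω ^ (α + ε)) ∂μ ≠ ⊤) :
    Tendsto (fun x => (μ {ω | Θ₁ ω * X₁ ω > x ∧ Θ₂ ω * X₂ ω > x}).toReal / R x)
      atTop (𝓝 0) := by
  have hRpos : ∀ x, 0 < R x := fun x => by
    obtain ⟨c, hc, hcR⟩ := hRblw (|x| + 1) (by positivity)
    exact hc.trans_le (hcR x ⟨by linarith [neg_abs_le x], by linarith [le_abs_self x]⟩)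
  obtain ⟨N, C, hC, htail₁⟩ := exists_measure_gt_div_two_pow_le (lt_add_of_pos_right α hε)
    (by positivity) hRpos (hRrv 2⁻¹ (by norm_num)) hRblw hdom
  have htail₂ : ∀ x ≥ N, ∀ k : ℕ, μ (X₂ ⁻¹' Ioi (x / 2 ^ k)) ≤
      ENNReal.ofReal (((2 : ℝ) ^ k) ^ (α + ε)) * ENNReal.ofReal (C * R x) := fun x hx k =>
    (hid.measure_mem_eq measurableSet_Ioi).symm ▸ htail₁ x hx k
  have hind₁ : IndepFun Θ₁ X₁ μ := hindep.symm.comp measurable_fst measurable_fst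
  have hind₂ : IndepFun Θ₂ X₂ μ := hindep.symm.comp measurable_snd measurable_snd
  set T : ℕ → ℝ≥0∞ := fun m => ∑' j, dyadicMomentTerm μ Θ₁ (α + ε) (j + m) +
    ∑' j, dyadicMomentTerm μ Θ₂ (α + ε) (j + m)
  have hT : Tendsto T atTop (𝓝 0) := by
    simpa using (tendsto_tsum_dyadicMomentTerm_add hΘ₁ (by positivity) hmom₁).add
      (tendsto_tsum_dyadicMomentTerm_add hΘ₂ (by positivity) hmom₂)
  refine tendsto_zero_of_le_add (h := fun m => (T m).toReal * C)
    (Eventually.of_forall fun x => div_nonneg ENNReal.toReal_nonneg (hRpos x).le) ?_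
    (fun m => tendsto_measure_gt_div_div (c := 2 ^ m) (by positivity) hai hRpos
      (hRrv _ (by positivity)) hdom)
    (by simpa using ((ENNReal.tendsto_toReal ENNReal.zero_ne_top).comp hT).mul_const C)
  filter_upwards [hT.eventually (eventually_ne_nhds ENNReal.zero_ne_top)] with m hTm
  filter_upwards [eventually_ge_atTop N] with x hx
  exact toReal_div_le_of_le_add_mul_ofReal (measure_ne_top _ _) hTm hC (hRpos x)
    (measure_mul_gt_le (fun ω => (hX₁pos ω).le) (fun ω => (hX₂pos ω).le) hind₁ hind₂
      (htail₁ x hx) (htail₂ x hx) m)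

/-- joint tail of the weighted pair is negligible with respect to the
regularly varying dominating function. -/
theorem stmt_12 {Ω : Type*} [MeasurableSpace Ω] (μ : Measure Ω) [IsProbabilityMeasure μ]
    (X₁ X₂ Θ₁ Θ₂ : Ω → ℝ)
    (hX₁ : Measurable X₁) (hX₂ : Measurable X₂) (hΘ₁ : Measurable Θ₁) (hΘ₂ : Measurable Θ₂)
    (hX₁pos : ∀ ω, 0 < X₁ ω) (hX₂pos : ∀ ω, 0 < X₂ ω)
    (hΘ₁pos : ∀ ω, 0 < Θ₁ ω) (hΘ₂pos : ∀ ω, 0 < Θ₂ ω)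
    -- (X₁, X₂) independent of (Θ₁, Θ₂)
    (hindep : IndepFun (fun ω => (X₁ ω, X₂ ω)) (fun ω => (Θ₁ ω, Θ₂ ω)) μ)
    -- identically distributed
    (hid : IdentDistrib X₁ X₂ μ μ)
    -- asymptotic independence
    (hai : Tendsto (fun x => (μ {ω | X₁ ω > x ∧ X₂ ω > x}).toReal /
        (μ {ω | X₁ ω > x}).toReal) atTop (𝓝 0))
    (α : ℝ) (hα : 0 < α)
    (R : ℝ → ℝ)
    -- R regularly varying of index -α
    (hRrv : ∀ t > (0:ℝ), Tendsto (fun x => R (t * x) / R x) atTop (𝓝 (t ^ (-α))))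
    -- R bounded and bounded away from 0 on every bounded interval
    (hRbdd : ∃ C : ℝ, ∀ x, R x ≤ C)
    (hRblw : ∀ K > (0:ℝ), ∃ c > (0:ℝ), ∀ x ∈ Icc (-K) K, c ≤ R x)
    -- domination
    (hdom : ∀ x > (0:ℝ), (μ {ω | X₁ ω > x}).toReal ≤ R x)
    (ε : ℝ) (hε : 0 < ε)
    (hmom₁ : ∫⁻ ω, ENNReal.ofReal (Θ₁ ω ^ (α + ε)) ∂μ ≠ ⊤)
    (hmom₂ : ∫⁻ ω, ENNReal.ofReal (Θ₂ ω ^ (α + ε)) ∂μ ≠ ⊤) :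
    Tendsto (fun x => (μ {ω | Θ₁ ω * X₁ ω > x ∧ Θ₂ ω * X₂ ω > x}).toReal / R x)
      atTop (𝓝 0) :=
  stmt_12_general μ X₁ X₂ Θ₁ Θ₂ hΘ₁ hΘ₂ hX₁pos hX₂pos hindep hid hai α hα R hRrv hRblw hdom ε hε
    hmom₁ hmom₂
end

section
/- Let ρ be a σ-finite measure on (0,∞) with ∫₀^∞ y^{α+ε} ρ(dy) < ∞ for some α, ε > 0, and let ν be a σ-finite measure on (0,∞) with ν(x,∞) ≤ 2x^{-α} for all x > 0 and ν ⊛ ρ(x,∞) regularly varying of index -α. Fix b > 1 with ν(b,∞) ≤ 1 and define the probability measure μ(B) = ν(B ∩ (b,∞)) + (1 − ν(b,∞)) 1_B(1). Then μ ⊛ ρ(x,∞) ~ ν ⊛ ρ(x,∞) as x → ∞; in particular μ ⊛ ρ has regularly varying tail of index -α, and μ(y,∞) = ν(y,∞) for y > b. -/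
open MeasureTheory Filter Real Topology Set

/-- Product convolution of two measures on `(0,∞)` (as measures on `ℝ`):
the pushforward of the product measure under multiplication. -/
noncomputable def prodConv (ν ρ : MeasureTheory.Measure ℝ) : MeasureTheory.Measure ℝ :=
  (ν.prod ρ).map (fun p : ℝ × ℝ => p.1 * p.2)

/-!
Split `ν = ν|_(b,∞) + ν|_(0,b]`. Then
`μ ⊛ ρ (x,∞) - ν ⊛ ρ (x,∞) = (1 - ν(b,∞)) ρ(x,∞) - ν|_(0,b] ⊛ ρ (x,∞)`,
and both terms are `O(x^{-(α+ε)})`: the first by Markov's inequality for the moment of order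
`α+ε` of `ρ`, the second because only `v > x/b` contributes to
`ν|_(0,b] ⊛ ρ (x,∞) = ∫ ν((x/v, b]) ρ(dv) ≤ 2 x^{-α} ∫_{v > x/b} v^α ρ(dv)`.
A tail that is regularly varying of index `-α` dominates `x^{-(α+ε)}`, so the two tails are
asymptotically equivalent, and regular variation passes from one to the other.
-/

open scoped ENNReal
open Asymptotics

lemma prodConv_eq_mconv (ν ρ : Measure ℝ) : prodConv ν ρ = ν ∗ₘ ρ := rfl

lemma mconv_apply_Ioi (ψ ρ : Measure ℝ) [SFinite ψ] [SFinite ρ] (x : ℝ) :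
    (ψ ∗ₘ ρ) (Ioi x) = ∫⁻ v, ψ {u | x < u * v} ∂ρ := by
  rw [Measure.mconv, Measure.map_apply measurable_mul measurableSet_Ioi,
    Measure.prod_apply_symm (measurable_mul measurableSet_Ioi)]
  rfl

lemma setLIntegral_Ioi_rpow_le (ρ : Measure ℝ) {a ε t : ℝ} (hε : 0 ≤ ε) (ht : 0 < t) :
    ∫⁻ v in Ioi t, ENNReal.ofReal (v ^ a) ∂ρ ≤
      ENNReal.ofReal (t ^ (-ε)) * ∫⁻ v in Ioi 0, ENNReal.ofReal (v ^ (a + ε)) ∂ρ := by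
  calc ∫⁻ v in Ioi t, ENNReal.ofReal (v ^ a) ∂ρ
      ≤ ∫⁻ v in Ioi t, ENNReal.ofReal (t ^ (-ε)) * ENNReal.ofReal (v ^ (a + ε)) ∂ρ := by
        refine setLIntegral_mono (by fun_prop) fun v (hv : t < v) => ?_
        have hv0 : 0 < v := ht.trans hv
        rw [← ENNReal.ofReal_mul (by positivity)]
        gcongr
        calc v ^ a = v ^ (-ε) * v ^ (a + ε) := by rw [← rpow_add hv0]; ring_nf
          _ ≤ t ^ (-ε) * v ^ (a + ε) := by
            gcongr ?_ * _
            exact rpow_le_rpow_of_nonpos ht hv.le (neg_nonpos.mpr hε)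
    _ = ENNReal.ofReal (t ^ (-ε)) * ∫⁻ v in Ioi t, ENNReal.ofReal (v ^ (a + ε)) ∂ρ :=
        lintegral_const_mul _ (by fun_prop)
    _ ≤ ENNReal.ofReal (t ^ (-ε)) * ∫⁻ v in Ioi 0, ENNReal.ofReal (v ^ (a + ε)) ∂ρ := by
        gcongr

lemma measure_Ioi_le_mul_rpow_neg (ρ : Measure ℝ) {s t : ℝ} (hs : 0 ≤ s) (ht : 0 < t) :
    ρ (Ioi t) ≤ (∫⁻ v in Ioi 0, ENNReal.ofReal (v ^ s) ∂ρ) * ENNReal.ofReal (t ^ (-s)) := by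
  simpa [mul_comm] using setLIntegral_Ioi_rpow_le ρ (a := 0) hs ht

lemma mconv_restrict_Iic_apply_Ioi_le (ν ρ : Measure ℝ) [SFinite ν] [SFinite ρ] {α C b x : ℝ}
    (hC : 0 ≤ C) (hb : 0 < b) (hx : 0 < x) (hρ : ∀ᵐ v ∂ρ, 0 < v)
    (hν : ∀ y > 0, ν (Ioi y) ≤ ENNReal.ofReal (C * y ^ (-α))) :
    (ν.restrict (Iic b) ∗ₘ ρ) (Ioi x) ≤
      ENNReal.ofReal (C * x ^ (-α)) * ∫⁻ v in Ioi (x / b), ENNReal.ofReal (v ^ α) ∂ρ := by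
  rw [mconv_apply_Ioi, ← lintegral_const_mul _ (by fun_prop),
    ← lintegral_indicator measurableSet_Ioi]
  refine lintegral_mono_ae (hρ.mono fun v hv => ?_)
  have hset : {u | x < u * v} = Ioi (x / v) := by ext u; simp [div_lt_iff₀ hv]
  rw [hset, Measure.restrict_apply measurableSet_Ioi]
  by_cases hvb : v ∈ Ioi (x / b)
  · rw [indicator_of_mem hvb]
    calc ν (Ioi (x / v) ∩ Iic b) ≤ ν (Ioi (x / v)) := measure_mono inter_subset_left
      _ ≤ ENNReal.ofReal (C * (x / v) ^ (-α)) := hν _ (by positivity)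
      _ = ENNReal.ofReal (C * x ^ (-α)) * ENNReal.ofReal (v ^ α) := by
        rw [← ENNReal.ofReal_mul (by positivity), div_rpow hx.le hv.le, rpow_neg hv.le,
          div_inv_eq_mul, mul_assoc]
  · have hbxv : b ≤ x / v := by
      rw [mem_Ioi, not_lt, le_div_iff₀ hb] at hvb
      rwa [le_div_iff₀ hv, mul_comm]
    rw [indicator_of_notMem hvb, Ioi_inter_Iic, Ioc_eq_empty (not_lt.mpr hbxv), measure_empty]

lemma mconv_restrict_Iic_apply_Ioi_le_rpow (ν ρ : Measure ℝ) [SFinite ν] [SFinite ρ]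
    {α ε C b x : ℝ} (hε : 0 ≤ ε) (hC : 0 ≤ C) (hb : 0 < b) (hx : 0 < x) (hρ : ∀ᵐ v ∂ρ, 0 < v)
    (hν : ∀ y > 0, ν (Ioi y) ≤ ENNReal.ofReal (C * y ^ (-α))) :
    (ν.restrict (Iic b) ∗ₘ ρ) (Ioi x) ≤ ENNReal.ofReal (C * b ^ ε) *
      (∫⁻ v in Ioi 0, ENNReal.ofReal (v ^ (α + ε)) ∂ρ) * ENNReal.ofReal (x ^ (-(α + ε))) := by
  have hexp : C * x ^ (-α) * (x / b) ^ (-ε) = C * b ^ ε * x ^ (-(α + ε)) := by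
    rw [div_rpow hx.le hb.le, rpow_neg hb.le, neg_add, rpow_add hx, div_inv_eq_mul]
    ring
  calc (ν.restrict (Iic b) ∗ₘ ρ) (Ioi x)
      ≤ ENNReal.ofReal (C * x ^ (-α)) * ∫⁻ v in Ioi (x / b), ENNReal.ofReal (v ^ α) ∂ρ :=
        mconv_restrict_Iic_apply_Ioi_le ν ρ hC hb hx hρ hν
    _ ≤ ENNReal.ofReal (C * x ^ (-α)) * (ENNReal.ofReal ((x / b) ^ (-ε)) *
          ∫⁻ v in Ioi 0, ENNReal.ofReal (v ^ (α + ε)) ∂ρ) := by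
        gcongr
        exact setLIntegral_Ioi_rpow_le ρ hε (by positivity)
    _ = _ := by
        rw [← mul_assoc, ← ENNReal.ofReal_mul (by positivity), hexp,
          ENNReal.ofReal_mul (by positivity)]
        ring

lemma tendsto_atTop_dyadic_of_mul_le {F : ℝ → ℝ} {q x₀ : ℝ} (hx₀ : 0 ≤ x₀) (hq : 1 < q)
    (hpos : 0 < F x₀) (hstep : ∀ x ≥ x₀, q * F x ≤ F (2 * x)) :
    Tendsto (fun n : ℕ => F (2 ^ n * x₀)) atTop atTop := by
  have hgeom : ∀ n : ℕ, q ^ n * F x₀ ≤ F (2 ^ n * x₀) := by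
    intro n
    induction n with
    | zero => simp
    | succ n ih =>
      calc q ^ (n + 1) * F x₀ = q * (q ^ n * F x₀) := by ring
        _ ≤ q * F (2 ^ n * x₀) := by gcongr
        _ ≤ F (2 * (2 ^ n * x₀)) := hstep _ (le_mul_of_one_le_left hx₀ (one_le_pow₀ one_le_two))
        _ = F (2 ^ (n + 1) * x₀) := by ring_nf
  exact tendsto_atTop_mono hgeom ((tendsto_pow_atTop_atTop_of_one_lt hq).atTop_mul_const hpos)

lemma tendsto_atTop_of_tendsto_dyadic {F : ℝ → ℝ} {K x₀ : ℝ} (hx₀ : 0 < x₀) (hK : 0 < K)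
    (hseq : Tendsto (fun n : ℕ => F (2 ^ n * x₀)) atTop atTop)
    (hloc : ∀ x ≥ x₀, ∀ y ∈ Icc x (2 * x), K * F (2 * x) ≤ F y) :
    Tendsto F atTop atTop := by
  refine tendsto_atTop.mpr fun M => ?_
  obtain ⟨N, hN⟩ := tendsto_atTop_atTop.mp hseq (M / K)
  filter_upwards [eventually_ge_atTop (2 ^ N * x₀)] with x hx
  obtain ⟨n, hnx, hxn⟩ := exists_nat_pow_near (x := x / x₀) (y := (2 : ℝ))
    ((one_le_div hx₀).mpr ((le_mul_of_one_le_left hx₀.le (one_le_pow₀ one_le_two)).trans hx))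
    one_lt_two
  have hNn : N < n + 1 :=
    (pow_lt_pow_iff_right₀ one_lt_two).mp (((le_div_iff₀ hx₀).mpr hx).trans_lt hxn)
  rw [le_div_iff₀ hx₀] at hnx
  rw [div_lt_iff₀ hx₀, pow_succ', mul_assoc] at hxn
  calc M = K * (M / K) := by field_simp
    _ ≤ K * F (2 ^ (n + 1) * x₀) := by gcongr; exact hN _ hNn.le
    _ = K * F (2 * (2 ^ n * x₀)) := by ring_nf
    _ ≤ F x := hloc _ (le_mul_of_one_le_left hx₀.le (one_le_pow₀ one_le_two)) x ⟨hnx, hxn.le⟩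

/-- `x ^ s * G x` grows geometrically along `2 ^ n * x₀`, and monotonicity of `G` interpolates
between these points. -/
lemma tendsto_rpow_mul_atTop_of_antitoneOn {G : ℝ → ℝ} {α s a : ℝ} (hs : 0 ≤ s) (hαs : α < s)
    (hanti : AntitoneOn G (Ici a)) (hpos : ∀ᶠ x in atTop, 0 < G x)
    (hG : Tendsto (fun x => G (2 * x) / G x) atTop (𝓝 (2 ^ (-α)))) :
    Tendsto (fun x => x ^ s * G x) atTop atTop := by
  obtain ⟨q, hq1, hq⟩ := exists_between (one_lt_rpow one_lt_two (sub_pos.mpr hαs))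
  have hlim : q * 2 ^ (-s) < (2 : ℝ) ^ (-α) := by
    calc q * 2 ^ (-s) < 2 ^ (s - α) * (2 : ℝ) ^ (-s) := by gcongr
      _ = 2 ^ (-α) := by rw [← rpow_add two_pos]; ring_nf
  have hstep : ∀ᶠ x in atTop, 0 < G x ∧ q * 2 ^ (-s) * G x < G (2 * x) := by
    filter_upwards [hpos, hG.eventually (eventually_gt_nhds hlim)] with x hx hratio
    exact ⟨hx, (lt_div_iff₀ hx).mp hratio⟩
  obtain ⟨x₀, hx₀⟩ := eventually_atTop.mp (hstep.and (eventually_ge_atTop (max a 1)))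
  have hx₀a : a ≤ x₀ := le_of_max_le_left (hx₀ x₀ le_rfl).2
  have hx₀1 : 1 ≤ x₀ := le_of_max_le_right (hx₀ x₀ le_rfl).2
  have hx₀pos : 0 < x₀ := one_pos.trans_le hx₀1
  refine tendsto_atTop_of_tendsto_dyadic hx₀pos (rpow_pos_of_pos two_pos (-s)) ?_ ?_
  · refine tendsto_atTop_dyadic_of_mul_le (F := fun x => x ^ s * G x) hx₀pos.le hq1 ?_
      fun x hx => ?_
    · exact mul_pos (rpow_pos_of_pos hx₀pos s) (hx₀ x₀ le_rfl).1.1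
    · have hx0 : 0 < x := hx₀pos.trans_le hx
      calc q * (x ^ s * G x) = 2 ^ s * x ^ s * (q * 2 ^ (-s) * G x) := by
            rw [rpow_neg two_pos.le]; field_simp
        _ ≤ 2 ^ s * x ^ s * G (2 * x) := by gcongr; exact (hx₀ x hx).1.2.le
        _ = (2 * x) ^ s * G (2 * x) := by rw [mul_rpow two_pos.le hx0.le]
  · intro x hx y ⟨hxy, hy⟩
    have hx0 : 0 < x := hx₀pos.trans_le hx
    have hG2x : 0 < G (2 * x) := (hx₀ (2 * x) (by linarith)).1.1
    calc 2 ^ (-s) * ((2 * x) ^ s * G (2 * x)) = x ^ s * G (2 * x) := by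
          rw [mul_rpow two_pos.le hx0.le, ← mul_assoc, ← mul_assoc, ← rpow_add two_pos,
            neg_add_cancel, rpow_zero, one_mul]
      _ ≤ y ^ s * G y :=
          mul_le_mul (rpow_le_rpow hx0.le hxy hs)
            (hanti (hx₀a.trans (hx.trans hxy)) (hx₀a.trans (by linarith)) hy) hG2x.le
            (rpow_pos_of_pos (hx0.trans_le hxy) s).le

lemma isBigO_toReal_of_le_mul_ofReal {ι : Type*} {l : Filter ι} {f : ι → ℝ≥0∞} {g : ι → ℝ}
    {C : ℝ≥0∞} (hC : C ≠ ⊤) (h : ∀ᶠ x in l, f x ≤ C * ENNReal.ofReal (g x)) :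
    (fun x => (f x).toReal) =O[l] g := by
  refine IsBigO.of_bound C.toReal (h.mono fun x hx => ?_)
  rw [Real.norm_of_nonneg ENNReal.toReal_nonneg]
  calc (f x).toReal ≤ (C * ENNReal.ofReal (g x)).toReal :=
        ENNReal.toReal_mono (by finiteness) hx
    _ = C.toReal * max (g x) 0 := by rw [ENNReal.toReal_mul, ENNReal.toReal_ofReal']
    _ ≤ C.toReal * ‖g x‖ := by gcongr; exact max_le (le_abs_self _) (abs_nonneg _)

lemma eventually_ne_zero_of_tendsto_div_self {ι : Type*} {l : Filter ι} {f : ι → ℝ}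
    (h : Tendsto (fun x => f x / f x) l (𝓝 1)) : ∀ᶠ x in l, f x ≠ 0 :=
  (h.eventually (eventually_ne_nhds one_ne_zero)).mono fun x hx h0 => hx (by simp [h0])

lemma Asymptotics.IsEquivalent.tendsto_comp_mul_div {f g : ℝ → ℝ} (h : f ~[atTop] g) {t c : ℝ}
    (ht : 0 < t) (hg : Tendsto (fun x => g (t * x) / g x) atTop (𝓝 c)) :
    Tendsto (fun x => f (t * x) / f x) atTop (𝓝 c) :=
  ((h.comp_tendsto (tendsto_id.const_mul_atTop ht)).div h).symm.tendsto_nhds hg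

lemma isLittleO_rpow_neg_of_antitoneOn {G : ℝ → ℝ} {α s a : ℝ} (hs : 0 ≤ s) (hαs : α < s)
    (hanti : AntitoneOn G (Ici a)) (hpos : ∀ᶠ x in atTop, 0 < G x)
    (hG : Tendsto (fun x => G (2 * x) / G x) atTop (𝓝 (2 ^ (-α)))) :
    (fun x => x ^ (-s)) =o[atTop] G := by
  rw [isLittleO_iff_tendsto' (hpos.mono fun x hx h => absurd h hx.ne')]
  refine (tendsto_rpow_mul_atTop_of_antitoneOn hs hαs hanti hpos hG).inv_tendsto_atTop.congr' ?_
  filter_upwards [eventually_gt_atTop 0] with x hx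
  rw [Pi.inv_apply, mul_inv, rpow_neg hx.le, div_eq_mul_inv]

lemma restrict_Ioi_add_smul_dirac_one_apply_Ioi (ν : Measure ℝ) {b y : ℝ} (c : ℝ≥0∞)
    (hby : b ≤ y) (hy : 1 ≤ y) :
    (ν.restrict (Ioi b) + c • Measure.dirac (1 : ℝ)) (Ioi y) = ν (Ioi y) := by
  rw [Measure.add_apply, Measure.restrict_apply measurableSet_Ioi,
    inter_eq_left.mpr (Ioi_subset_Ioi hby), Measure.smul_apply,
    Measure.dirac_apply' _ measurableSet_Ioi, indicator_of_notMem (notMem_Ioi.mpr hy)]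
  simp

section Truncation

variable (ν ρ : Measure ℝ) [SFinite ν] [SFinite ρ] {b : ℝ} (c : ℝ≥0∞)

lemma toReal_mconv_truncate_sub {x : ℝ} (hc : c ≠ ⊤) (hν : (ν ∗ₘ ρ) (Ioi x) ≠ ⊤)
    (hρ : ρ (Ioi x) ≠ ⊤) :
    (((ν.restrict (Ioi b) + c • Measure.dirac 1) ∗ₘ ρ) (Ioi x)).toReal -
        ((ν ∗ₘ ρ) (Ioi x)).toReal =
      (c * ρ (Ioi x)).toReal - ((ν.restrict (Iic b) ∗ₘ ρ) (Ioi x)).toReal := by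
  have hsplit : ν ∗ₘ ρ = ν.restrict (Ioi b) ∗ₘ ρ + ν.restrict (Iic b) ∗ₘ ρ := by
    rw [← Measure.add_mconv, ← compl_Ioi, Measure.restrict_add_restrict_compl measurableSet_Ioi]
  rw [hsplit, Measure.add_apply, ENNReal.add_ne_top] at hν
  rw [hsplit, Measure.add_mconv, Measure.mconv_smul_left, Measure.dirac_one_mconv,
    Measure.add_apply, Measure.add_apply, Measure.smul_apply, smul_eq_mul,
    ENNReal.toReal_add hν.1 (by finiteness), ENNReal.toReal_add hν.1 hν.2]
  ring

theorem isEquivalent_mconv_truncate_tail {α ε C : ℝ} (hα : 0 ≤ α) (hε : 0 < ε) (hC : 0 ≤ C)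
    (hb : 0 < b) (hc : c ≠ ⊤) (hρ : ∀ᵐ v ∂ρ, 0 < v)
    (hmom : ∫⁻ v in Ioi 0, ENNReal.ofReal (v ^ (α + ε)) ∂ρ ≠ ⊤)
    (hν : ∀ y > 0, ν (Ioi y) ≤ ENNReal.ofReal (C * y ^ (-α)))
    (hne : ∀ᶠ x in atTop, ((ν ∗ₘ ρ) (Ioi x)).toReal ≠ 0)
    (h2 : Tendsto (fun x => ((ν ∗ₘ ρ) (Ioi (2 * x))).toReal / ((ν ∗ₘ ρ) (Ioi x)).toReal)
      atTop (𝓝 (2 ^ (-α)))) :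
    (fun x => (((ν.restrict (Ioi b) + c • Measure.dirac 1) ∗ₘ ρ) (Ioi x)).toReal) ~[atTop]
      fun x => ((ν ∗ₘ ρ) (Ioi x)).toReal := by
  set M := ∫⁻ v in Ioi 0, ENNReal.ofReal (v ^ (α + ε)) ∂ρ
  have hfin : ∀ᶠ x in atTop, (ν ∗ₘ ρ) (Ioi x) ≠ ⊤ :=
    hne.mono fun x hx htop => hx (by simp [htop])
  have hρtail : ∀ x > 0, ρ (Ioi x) ≤ M * ENNReal.ofReal (x ^ (-(α + ε))) := fun x hx =>
    measure_Ioi_le_mul_rpow_neg ρ (by positivity) hx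
  have hdiff : (fun x => (c * ρ (Ioi x)).toReal - ((ν.restrict (Iic b) ∗ₘ ρ) (Ioi x)).toReal)
      =O[atTop] fun x => x ^ (-(α + ε)) := by
    refine (isBigO_toReal_of_le_mul_ofReal (C := c * M) (by finiteness) ?_).sub
      (isBigO_toReal_of_le_mul_ofReal (C := ENNReal.ofReal (C * b ^ ε) * M) (by finiteness) ?_)
    · filter_upwards [eventually_gt_atTop 0] with x hx
      rw [mul_assoc]
      gcongr
      exact hρtail x hx
    · filter_upwards [eventually_gt_atTop 0] with x hx
      exact mconv_restrict_Iic_apply_Ioi_le_rpow ν ρ hε.le hC hb hx hρ hν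
  obtain ⟨x₀, hx₀⟩ := hfin.exists
  have hanti : AntitoneOn (fun x => ((ν ∗ₘ ρ) (Ioi x)).toReal) (Ici x₀) := fun x hx y _ hxy =>
    ENNReal.toReal_mono (ne_top_of_le_ne_top hx₀ (measure_mono (Ioi_subset_Ioi hx)))
      (measure_mono (Ioi_subset_Ioi hxy))
  have hsmall := isLittleO_rpow_neg_of_antitoneOn (s := α + ε) (by positivity) (by linarith) hanti
    (hne.mono fun x hx => ENNReal.toReal_nonneg.lt_of_ne' hx) h2
  refine (EventuallyEq.trans_isBigO ?_ hdiff).trans_isLittleO hsmall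
  filter_upwards [hfin, eventually_gt_atTop 0] with x hx hx0
  exact toReal_mconv_truncate_sub ν ρ c hc hx (ne_top_of_le_ne_top (by finiteness) (hρtail x hx0))

end Truncation

theorem stmt_17_general (ρ ν : Measure ℝ) [SigmaFinite ρ] [SigmaFinite ν]
    (hρsupp : ρ (Iio 0 ∪ {0}) = 0)
    (α ε : ℝ) (hα : 0 < α) (hε : 0 < ε)
    (hmom : ∫⁻ y in Ioi (0:ℝ), ENNReal.ofReal (y ^ (α + ε)) ∂ρ ≠ ⊤)
    -- tail bound on ν
    (hνbd : ∀ x > (0:ℝ), ν (Ioi x) ≤ ENNReal.ofReal (2 * x ^ (-α)))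
    -- ν ⊛ ρ regularly varying of index -α
    (hrv : ∀ t > (0:ℝ),
      Tendsto (fun x => ((prodConv ν ρ) (Ioi (t * x))).toReal /
        ((prodConv ν ρ) (Ioi x)).toReal) atTop (𝓝 (t ^ (-α))))
    (b : ℝ) (hb : 1 < b)
    (μ : Measure ℝ)
    (hμ : μ = ν.restrict (Ioi b) + (1 - ν (Ioi b)) • Measure.dirac 1) :
    Tendsto (fun x => ((prodConv μ ρ) (Ioi x)).toReal /
        ((prodConv ν ρ) (Ioi x)).toReal) atTop (𝓝 1) ∧
    (∀ t > (0:ℝ),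
      Tendsto (fun x => ((prodConv μ ρ) (Ioi (t * x))).toReal /
        ((prodConv μ ρ) (Ioi x)).toReal) atTop (𝓝 (t ^ (-α)))) ∧
    (∀ y > b, μ (Ioi y) = ν (Ioi y)) := by
  subst hμ
  simp only [prodConv_eq_mconv] at hrv ⊢
  have hρpos : ∀ᵐ v ∂ρ, 0 < v := by
    rw [Iio_union_right, ← compl_Ioi] at hρsupp
    exact hρsupp
  have hne := eventually_ne_zero_of_tendsto_div_self (by simpa using hrv 1 one_pos)
  have hequiv := isEquivalent_mconv_truncate_tail ν ρ (1 - ν (Ioi b)) hα.le hε zero_le_two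
    (zero_lt_one.trans hb) (by finiteness) hρpos hmom hνbd hne (hrv 2 two_pos)
  exact ⟨(isEquivalent_iff_tendsto_one hne).mp hequiv,
    fun t ht => hequiv.tendsto_comp_mul_div ht (hrv t ht),
    fun y hy => restrict_Ioi_add_smul_dirac_one_apply_Ioi ν _ hy.le (hb.trans hy).le⟩

/-- replacing the σ-finite measure `ν` by the probability measure `μ`
obtained by truncating `ν` to `(b,∞)` and putting the remaining mass at `1` does not
change the asymptotics of the product convolution tail. -/
theorem stmt_17 (ρ ν : Measure ℝ) [SigmaFinite ρ] [SigmaFinite ν]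
    (hρsupp : ρ (Iio 0 ∪ {0}) = 0) (hνsupp : ν (Iio 0 ∪ {0}) = 0)
    (α ε : ℝ) (hα : 0 < α) (hε : 0 < ε)
    (hmom : ∫⁻ y in Ioi (0:ℝ), ENNReal.ofReal (y ^ (α + ε)) ∂ρ ≠ ⊤)
    -- tail bound on ν
    (hνbd : ∀ x > (0:ℝ), ν (Ioi x) ≤ ENNReal.ofReal (2 * x ^ (-α)))
    -- ν ⊛ ρ regularly varying of index -α
    (hrv : ∀ t > (0:ℝ),
      Tendsto (fun x => ((prodConv ν ρ) (Ioi (t * x))).toReal /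
        ((prodConv ν ρ) (Ioi x)).toReal) atTop (𝓝 (t ^ (-α))))
    (b : ℝ) (hb : 1 < b) (hbν : ν (Ioi b) ≤ 1)
    (μ : Measure ℝ)
    (hμ : μ = ν.restrict (Ioi b) + (1 - ν (Ioi b)) • Measure.dirac 1) :
    Tendsto (fun x => ((prodConv μ ρ) (Ioi x)).toReal /
        ((prodConv ν ρ) (Ioi x)).toReal) atTop (𝓝 1) ∧
    (∀ t > (0:ℝ),
      Tendsto (fun x => ((prodConv μ ρ) (Ioi (t * x))).toReal /
        ((prodConv μ ρ) (Ioi x)).toReal) atTop (𝓝 (t ^ (-α)))) ∧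
    (∀ y > b, μ (Ioi y) = ν (Ioi y)) :=
  stmt_17_general ρ ν hρsupp α ε hα hε hmom hνbd hrv b hb μ hμ
end
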